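/- arXiv:2502.00378 — 14 statements merged into one kernel-verified Lean document; each statement's English description precedes it below -/
import Mathlib

section
/- Let b ≥ 2, d ≥ 1, n ≥ 1 be integers with d dividing n, let g = gcd(b, d), and let ω ∈ ℂ be a primitive d-th root of unity. Then in the polynomial ring ℂ[t] one has the identity (1 − t^d)^(n/d) · ∏_{i=0}^{n−1} (1 + ω^i t + (ω^i t)^2 + ⋯ + (ω^i t)^(b−1)) = (1 − t^(bd/g))^(g·n/d). -/
open Polynomial Finset

/-!
Since `1 - ω^i t` times the `i`-th factor is `1 - (ω^b)^i t^b`, and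
`∏_{i<d} (1 - ω^i t) = 1 - t^d`, one period of the product collapses to
`∏_{i<d} (1 - (ω^b)^i t^b)`. Now `ω^b` is a primitive
`(d/g)`-th root of unity, so this is `g` periods of `∏_{i<d/g} (1 - (ω^b)^i s) = 1 - s^(d/g)`
at `s = t^b`. The factors depend only on `i mod d`, so the product over `i < n` is a
`(n/d)`-th power of one period.
-/

theorem Finset.prod_range_mul_eq_pow_of_periodic {M : Type*} [CommMonoid M] {f : ℕ → M}
    {p : ℕ} (hf : Function.Periodic f p) (k : ℕ) :
    ∏ i ∈ range (k * p), f i = (∏ i ∈ range p, f i) ^ k := by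
  induction k with
  | zero => simp
  | succ k ih =>
    rw [Nat.succ_mul, prod_range_add, ih, pow_succ]
    congr 1
    exact prod_congr rfl fun i _ ↦ by simpa [add_comm] using hf.nat_mul k i

namespace IsPrimitiveRoot

theorem pow_div_gcd {M : Type*} [CommMonoid M] {ζ : M} {k : ℕ} (h : IsPrimitiveRoot ζ k)
    (hk : k ≠ 0) (b : ℕ) : IsPrimitiveRoot (ζ ^ b) (k / k.gcd b) := by
  rw [IsPrimitiveRoot.iff_orderOf, (h.isOfFinOrder hk).orderOf_pow, ← h.eq_orderOf]

variable {R : Type*} [CommRing R] [IsDomain R]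

theorem prod_one_sub_pow_mul {ζ : R} {m : ℕ} (h : IsPrimitiveRoot ζ m) (hm : 0 < m) (x : R) :
    ∏ i ∈ range m, (1 - ζ ^ i * x) = 1 - x ^ m := by
  have : NeZero m := ⟨hm.ne'⟩
  rw [← one_pow m, h.pow_sub_pow_eq_prod_sub_mul 1 x hm, one_pow]
  refine prod_nbij (ζ ^ ·) (fun i _ ↦ ?_) h.injOn_pow (fun ξ hξ ↦ ?_) fun _ _ ↦ rfl
  · rw [Polynomial.mem_nthRootsFinset hm, ← pow_mul, mul_comm, pow_mul, h.pow_eq_one, one_pow]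
  · obtain ⟨i, hi, rfl⟩ := h.eq_pow_of_pow_eq_one ((Polynomial.mem_nthRootsFinset hm 1).mp hξ)
    exact ⟨i, mem_range.mpr hi, rfl⟩

theorem prod_range_mul_one_sub_pow_mul {ζ : R} {m : ℕ} (h : IsPrimitiveRoot ζ m) (hm : 0 < m)
    (k : ℕ) (x : R) : ∏ i ∈ range (k * m), (1 - ζ ^ i * x) = (1 - x ^ m) ^ k := by
  have hper : Function.Periodic (fun i ↦ 1 - ζ ^ i * x) m := fun i ↦ by
    simp only [pow_add, h.pow_eq_one, mul_one]
  rw [prod_range_mul_eq_pow_of_periodic hper, h.prod_one_sub_pow_mul hm]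

theorem one_sub_pow_mul_prod_geom_sum {ζ : R} {d : ℕ} (h : IsPrimitiveRoot ζ d) (hd : 0 < d)
    (b : ℕ) (x : R) :
    (1 - x ^ d) * ∏ i ∈ range d, ∑ j ∈ range b, (ζ ^ i * x) ^ j =
      (1 - x ^ (b * d / b.gcd d)) ^ b.gcd d := by
  set g := b.gcd d
  have hgd : g ∣ d := Nat.gcd_dvd_right b d
  have hη : IsPrimitiveRoot (ζ ^ b) (d / g) := by
    simpa [g, Nat.gcd_comm] using h.pow_div_gcd hd.ne' b
  have hterm : ∀ i,
      (1 - ζ ^ i * x) * ∑ j ∈ range b, (ζ ^ i * x) ^ j = 1 - (ζ ^ b) ^ i * x ^ b :=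
    fun i ↦ by rw [mul_neg_geom_sum, mul_pow, ← pow_mul, ← pow_mul, mul_comm b]
  calc (1 - x ^ d) * ∏ i ∈ range d, ∑ j ∈ range b, (ζ ^ i * x) ^ j
      = ∏ i ∈ range (g * (d / g)), (1 - (ζ ^ b) ^ i * x ^ b) := by
        rw [Nat.mul_div_cancel' hgd, ← h.prod_one_sub_pow_mul hd, ← prod_mul_distrib]
        exact prod_congr rfl fun i _ ↦ hterm i
    _ = (1 - x ^ (b * d / g)) ^ g := by
        rw [hη.prod_range_mul_one_sub_pow_mul (Nat.div_pos (Nat.le_of_dvd hd hgd)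
          (Nat.gcd_pos_of_pos_right b hd)), ← pow_mul, Nat.mul_div_assoc b hgd]

end IsPrimitiveRoot

theorem stmt_0_general (b d n : ℕ) (hd : 1 ≤ d) (hdn : d ∣ n)
    (g : ℕ) (hg : g = Nat.gcd b d) (ω : ℂ) (hω : IsPrimitiveRoot ω d) :
    (1 - X ^ d) ^ (n / d) *
      ∏ i ∈ Finset.range n, (∑ j ∈ Finset.range b, C ((ω ^ i) ^ j) * X ^ j) =
    (1 - X ^ (b * d / g)) ^ (g * (n / d)) := by
  obtain ⟨m, rfl⟩ := hdn
  have hCω : IsPrimitiveRoot (C ω) d := hω.map_of_injective C_injective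
  have hsummand : ∀ i j, C ((ω ^ i) ^ j) * X ^ j = (C ω ^ i * X) ^ j := fun i j ↦ by
    rw [mul_pow, map_pow, map_pow]
  have hper : Function.Periodic (fun i ↦ ∑ j ∈ range b, (C ω ^ i * X) ^ j) d := fun i ↦ by
    simp only [pow_add, hCω.pow_eq_one, mul_one]
  simp only [hsummand]
  rw [Nat.mul_div_cancel_left m hd, mul_comm d m, prod_range_mul_eq_pow_of_periodic hper,
    ← mul_pow, hCω.one_sub_pow_mul_prod_geom_sum hd, hg, pow_mul]

/-- **Theorem (Main Theorem, part a, product form).**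
If `b ≥ 2`, `d ≥ 1`, `n ≥ 1`, `d ∣ n`, `g = gcd(b,d)` and `ω` is a primitive `d`th root of
unity, then `(1 - t^d)^(n/d) · ∏_{i=0}^{n-1} (1 + ω^i t + ⋯ + (ω^i t)^(b-1))
  = (1 - t^(bd/g))^(g·n/d)` in `ℂ[t]`. -/
theorem stmt_0 (b d n : ℕ) (hb : 2 ≤ b) (hd : 1 ≤ d) (hn : 1 ≤ n) (hdn : d ∣ n)
    (g : ℕ) (hg : g = Nat.gcd b d) (ω : ℂ) (hω : IsPrimitiveRoot ω d) :
    (1 - X ^ d) ^ (n / d) *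
      ∏ i ∈ Finset.range n, (∑ j ∈ Finset.range b, C ((ω ^ i) ^ j) * X ^ j) =
    (1 - X ^ (b * d / g)) ^ (g * (n / d)) :=
  stmt_0_general b d n hd hdn g hg ω hω
end

section
/- Let b ≥ 2, d ≥ 1, n ≥ 1 be integers with d dividing n and gcd(b, d) = 1, let ω ∈ ℂ be a primitive d-th root of unity, and let k ≥ 0. Then the coefficient of t^k in the polynomial ∏_{i=0}^{n−1} (1 + ω^i t + (ω^i t)^2 + ⋯ + (ω^i t)^(b−1)) ∈ ℂ[t] equals binom^{(b)}(n/d, k/d) if d divides k, and equals 0 if d does not divide k. -/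
open Polynomial Finset

/-- `binomB b n k` is the coefficient of `t^k` in `(1 + t + ⋯ + t^(b-1))^n`. -/
noncomputable def binomB (b n k : ℕ) : ℕ :=
  (((∑ j ∈ Finset.range b, (X : Polynomial ℕ) ^ j)) ^ n).coeff k

private lemma aux_prod_periodic {M : Type*} [CommMonoid M] (f : ℕ → M) (d : ℕ)
    (hf : ∀ i, f (i + d) = f i) (m : ℕ) :
    ∏ i ∈ Finset.range (m * d), f i = (∏ i ∈ Finset.range d, f i) ^ m := by
  have hshift : ∀ a i, f (a * d + i) = f i := by
    intro a
    induction a with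
    | zero => simp
    | succ a ih => intro i; rw [add_one_mul, add_right_comm, hf, ih]
  induction m with
  | zero => simp
  | succ m ih =>
    rw [add_one_mul, Finset.prod_range_add, ih, pow_succ]
    congr 1
    exact Finset.prod_congr rfl fun i _ => hshift m i

private lemma aux_prod_lin (d : ℕ) (hd : 0 < d) (ζ : ℂ) (hζ : IsPrimitiveRoot ζ d) :
    ∏ i ∈ Finset.range d, (C (ζ ^ i) * X - 1) =
      C ((-1 : ℂ) ^ (d + 1)) * (X ^ d - 1) := by
  have hroots : (X : ℂ[X]) ^ d - 1 = ∏ i ∈ Finset.range d, (X - C (ζ ^ i)) := by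
    simpa using X_pow_sub_C_eq_prod hζ hd (one_pow d)
  have hζ0 : ζ ≠ 0 := hζ.ne_zero hd.ne'
  have h0 : -1 = ∏ i ∈ Finset.range d, (-(ζ ^ i)) := by
    have := congrArg (Polynomial.eval 0) hroots
    simpa [eval_prod, zero_pow hd.ne'] using this
  have h1 : ((-1 : ℂ)) ^ d * ∏ i ∈ Finset.range d, ζ ^ i = -1 := by
    rw [show ((-1 : ℂ)) ^ d = ∏ _i ∈ Finset.range d, (-1 : ℂ) by simp,
      ← Finset.prod_mul_distrib]
    simpa [neg_one_mul] using h0.symm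
  have hdd : ((-1 : ℂ)) ^ d * ((-1 : ℂ)) ^ d = 1 := by
    rw [← pow_add, ← two_mul, pow_mul]; norm_num
  have hc : ∏ i ∈ Finset.range d, ζ ^ i = (-1 : ℂ) ^ (d + 1) := by
    calc ∏ i ∈ Finset.range d, ζ ^ i
        = ((-1:ℂ)^d * (-1:ℂ)^d) * ∏ i ∈ Finset.range d, ζ ^ i := by rw [hdd, one_mul]
      _ = (-1:ℂ)^d * ((-1:ℂ)^d * ∏ i ∈ Finset.range d, ζ ^ i) := by ring
      _ = (-1:ℂ)^d * (-1) := by rw [h1]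
      _ = (-1:ℂ) ^ (d+1) := by rw [pow_succ]
  have hroots' : (X : ℂ[X]) ^ d - 1 = ∏ i ∈ Finset.range d, (X - C ((ζ⁻¹) ^ i)) := by
    simpa using X_pow_sub_C_eq_prod hζ.inv hd (one_pow d)
  have hfac : ∀ i, C (ζ ^ i) * X - 1 = C (ζ ^ i) * (X - C ((ζ⁻¹) ^ i)) := by
    intro i
    rw [mul_sub, ← C_mul, ← mul_pow, mul_inv_cancel₀ hζ0, one_pow, C_1]
  calc ∏ i ∈ Finset.range d, (C (ζ ^ i) * X - 1)
      = ∏ i ∈ Finset.range d, (C (ζ ^ i) * (X - C ((ζ⁻¹) ^ i))) :=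
        Finset.prod_congr rfl fun i _ => hfac i
    _ = (∏ i ∈ Finset.range d, C (ζ ^ i)) * ∏ i ∈ Finset.range d, (X - C ((ζ⁻¹) ^ i)) :=
        Finset.prod_mul_distrib
    _ = C ((-1 : ℂ) ^ (d + 1)) * (X ^ d - 1) := by
        rw [← map_prod, hc, ← hroots']

/-- **Theorem (Main Theorem, part a).**
If `d ∣ n`, `gcd(b,d) = 1` and `ω` is a primitive `d`th root of unity, then the coefficient
of `t^k` in `∏_{i=0}^{n-1} (1 + ω^i t + ⋯ + (ω^i t)^(b-1))` is `binom^(b)(n/d, k/d)` if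
`d ∣ k` and `0` otherwise. -/
theorem stmt_1 (b d n k : ℕ) (hb : 2 ≤ b) (hd : 1 ≤ d) (hn : 1 ≤ n) (hdn : d ∣ n)
    (hbd : Nat.gcd b d = 1) (ω : ℂ) (hω : IsPrimitiveRoot ω d) :
    (∏ i ∈ Finset.range n, (∑ j ∈ Finset.range b, C ((ω ^ i) ^ j) * X ^ j)).coeff k =
      if d ∣ k then (binomB b (n / d) (k / d) : ℂ) else 0 := by
  have hd0 : 0 < d := hd
  obtain ⟨m, rfl⟩ := hdn
  have hSrw : ∀ i : ℕ, (∑ j ∈ Finset.range b, C ((ω ^ i) ^ j) * X ^ j)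
      = ∑ j ∈ Finset.range b, (C (ω ^ i) * X) ^ j := by
    intro i; refine Finset.sum_congr rfl fun j _ => ?_
    rw [mul_pow, ← C_pow]
  have key : ∏ i ∈ Finset.range d, (∑ j ∈ Finset.range b, (C (ω ^ i) * X) ^ j)
      = ∑ j ∈ Finset.range b, ((X : ℂ[X]) ^ d) ^ j := by
    have hzero : (C ((-1 : ℂ) ^ (d + 1)) * ((X : ℂ[X]) ^ d - 1)) ≠ 0 := by
      apply mul_ne_zero
      · simp only [ne_eq, C_eq_zero]
        exact pow_ne_zero _ (by norm_num)
      · have := X_pow_sub_C_ne_zero hd0 (1 : ℂ)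
        simpa using this
    apply mul_right_cancel₀ hzero
    have hfac : ∀ i ∈ Finset.range d,
        (∑ j ∈ Finset.range b, (C (ω ^ i) * X) ^ j) * (C (ω ^ i) * X - 1)
          = C (((ω ^ b) ^ i)) * X ^ b - 1 := by
      intro i _
      rw [geom_sum_mul, mul_pow, ← C_pow, ← pow_mul, mul_comm i b, pow_mul]
    have hωb : IsPrimitiveRoot (ω ^ b) d := hω.pow_of_coprime b hbd
    have hexp : ∏ i ∈ Finset.range d, (C (((ω ^ b) ^ i)) * X ^ b - 1)
        = Polynomial.expand ℂ b (∏ i ∈ Finset.range d, (C (((ω ^ b) ^ i)) * X - 1)) := by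
      rw [map_prod]
      refine Finset.prod_congr rfl fun i _ => ?_
      rw [map_sub, map_mul, Polynomial.expand_C, Polynomial.expand_X, map_one]
    calc (∏ i ∈ Finset.range d, (∑ j ∈ Finset.range b, (C (ω ^ i) * X) ^ j)) *
            (C ((-1 : ℂ) ^ (d + 1)) * ((X : ℂ[X]) ^ d - 1))
        = (∏ i ∈ Finset.range d, (∑ j ∈ Finset.range b, (C (ω ^ i) * X) ^ j)) *
            ∏ i ∈ Finset.range d, (C (ω ^ i) * X - 1) := by
          rw [aux_prod_lin d hd0 ω hω]
      _ = ∏ i ∈ Finset.range d,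
            ((∑ j ∈ Finset.range b, (C (ω ^ i) * X) ^ j) * (C (ω ^ i) * X - 1)) :=
          Finset.prod_mul_distrib.symm
      _ = ∏ i ∈ Finset.range d, (C (((ω ^ b) ^ i)) * X ^ b - 1) :=
          Finset.prod_congr rfl hfac
      _ = Polynomial.expand ℂ b (∏ i ∈ Finset.range d, (C (((ω ^ b) ^ i)) * X - 1)) := hexp
      _ = Polynomial.expand ℂ b (C ((-1 : ℂ) ^ (d + 1)) * ((X : ℂ[X]) ^ d - 1)) := by
          rw [aux_prod_lin d hd0 (ω ^ b) hωb]
      _ = C ((-1 : ℂ) ^ (d + 1)) * (((X : ℂ[X]) ^ b) ^ d - 1) := by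
          rw [map_mul, Polynomial.expand_C, map_sub, map_one,
            show (Polynomial.expand ℂ b) ((X : ℂ[X]) ^ d) = ((X : ℂ[X]) ^ b) ^ d by
              rw [map_pow, Polynomial.expand_X]]
      _ = C ((-1 : ℂ) ^ (d + 1)) * (((X : ℂ[X]) ^ d) ^ b - 1) := by
          rw [← pow_mul, mul_comm b d, pow_mul]
      _ = (∑ j ∈ Finset.range b, ((X : ℂ[X]) ^ d) ^ j) *
            (C ((-1 : ℂ) ^ (d + 1)) * ((X : ℂ[X]) ^ d - 1)) := by
          rw [← geom_sum_mul]; ring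
  have hper : ∀ i : ℕ, (∑ j ∈ Finset.range b, (C (ω ^ (i + d)) * X) ^ j)
      = ∑ j ∈ Finset.range b, (C (ω ^ i) * X) ^ j := by
    intro i
    rw [pow_add, hω.pow_eq_one, mul_one]
  have hprod : ∏ i ∈ Finset.range (d * m), (∑ j ∈ Finset.range b, C ((ω ^ i) ^ j) * X ^ j)
      = (∑ j ∈ Finset.range b, ((X : ℂ[X]) ^ d) ^ j) ^ m := by
    calc ∏ i ∈ Finset.range (d * m), (∑ j ∈ Finset.range b, C ((ω ^ i) ^ j) * X ^ j)
        = ∏ i ∈ Finset.range (m * d), (∑ j ∈ Finset.range b, (C (ω ^ i) * X) ^ j) := by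
          rw [mul_comm d m]; exact Finset.prod_congr rfl fun i _ => hSrw i
      _ = (∏ i ∈ Finset.range d, (∑ j ∈ Finset.range b, (C (ω ^ i) * X) ^ j)) ^ m :=
          aux_prod_periodic _ d hper m
      _ = _ := by rw [key]
  rw [hprod]
  have hexp2 : (∑ j ∈ Finset.range b, ((X : ℂ[X]) ^ d) ^ j) ^ m
      = Polynomial.expand ℂ d ((∑ j ∈ Finset.range b, (X : ℂ[X]) ^ j) ^ m) := by
    rw [map_pow, map_sum]
    simp [Polynomial.expand_X]
  rw [hexp2, Polynomial.coeff_expand hd0]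
  have hmap : ((∑ j ∈ Finset.range b, (X : ℂ[X]) ^ j) ^ m)
      = Polynomial.map (Nat.castRingHom ℂ) ((∑ j ∈ Finset.range b, (X : Polynomial ℕ) ^ j) ^ m) := by
    rw [Polynomial.map_pow, Polynomial.map_sum]
    simp
  have hdm : d * m / d = m := by rw [Nat.mul_div_cancel_left _ hd0]
  rw [hmap, Polynomial.coeff_map, hdm]
  simp [binomB]
end

section
/- Let b ≥ 2, d ≥ 1, n ≥ 1 be integers with d dividing n − 1, let g = gcd(b, d), and let ω ∈ ℂ be a primitive d-th root of unity. Then in the polynomial ring ℂ[t] one has the identity (1 − t^d)^((n−1)/d) · ∏_{i=0}^{n−1} (1 + ω^i t + (ω^i t)^2 + ⋯ + (ω^i t)^(b−1)) = (1 + t + t^2 + ⋯ + t^(b−1)) · (1 − t^(bd/g))^(g·(n−1)/d). -/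
open Polynomial Finset

private lemma prod_one_sub_C (e : ℕ) (he : 0 < e) (η : ℂ) (hη : IsPrimitiveRoot η e) :
    ∀ z : ℂ, ∏ i ∈ Finset.range e, (1 - η ^ i * z) = 1 - z ^ e := by
  intro z
  have h := X_pow_sub_C_eq_prod hη he (rfl : z ^ e = z ^ e)
  have := congrArg (Polynomial.eval 1) h
  simpa [eval_prod] using this.symm

private lemma prod_one_sub_poly (e : ℕ) (he : 0 < e) (η : ℂ) (hη : IsPrimitiveRoot η e)
    (p : Polynomial ℂ) :
    ∏ i ∈ Finset.range e, (1 - C (η ^ i) * p) = 1 - p ^ e := by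
  apply Polynomial.funext
  intro z
  simpa [eval_prod] using prod_one_sub_C e he η hη (p.eval z)

private lemma prod_periodic {M : Type*} [CommMonoid M] (f : ℕ → M) (d : ℕ)
    (hf : ∀ i, f (i + d) = f i) (m : ℕ) :
    ∏ i ∈ Finset.range (d * m), f i = (∏ i ∈ Finset.range d, f i) ^ m := by
  have hshift : ∀ k i, f (d * k + i) = f i := by
    intro k
    induction k with
    | zero => simp
    | succ k ihk =>
      intro i
      have : d * (k + 1) + i = (d * k + i) + d := by ring
      rw [this, hf, ihk]
  induction m with
  | zero => simp
  | succ m ih =>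
    rw [Nat.mul_succ, Finset.prod_range_add, ih, pow_succ]
    congr 1
    exact Finset.prod_congr rfl fun i _ => hshift m i

/-- **Theorem (Main Theorem, part b, product form).**
If `b ≥ 2`, `d ≥ 1`, `n ≥ 1`, `d ∣ (n-1)`, `g = gcd(b,d)` and `ω` is a primitive `d`th root
of unity, then `(1 - t^d)^((n-1)/d) · ∏_{i=0}^{n-1} (1 + ω^i t + ⋯ + (ω^i t)^(b-1))
  = (1 + t + ⋯ + t^(b-1)) · (1 - t^(bd/g))^(g·(n-1)/d)` in `ℂ[t]`. -/
theorem stmt_2 (b d n : ℕ) (hb : 2 ≤ b) (hd : 1 ≤ d) (hn : 1 ≤ n) (hdn : d ∣ (n - 1))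
    (g : ℕ) (hg : g = Nat.gcd b d) (ω : ℂ) (hω : IsPrimitiveRoot ω d) :
    (1 - X ^ d) ^ ((n - 1) / d) *
      ∏ i ∈ Finset.range n, (∑ j ∈ Finset.range b, C ((ω ^ i) ^ j) * X ^ j) =
    (∑ j ∈ Finset.range b, (X : Polynomial ℂ) ^ j) *
      (1 - X ^ (b * d / g)) ^ (g * ((n - 1) / d)) := by
  have hd0 : 0 < d := hd
  have hg0 : 0 < g := by
    rw [hg]; exact Nat.gcd_pos_of_pos_left d (by omega)
  have hgb : g ∣ b := hg ▸ Nat.gcd_dvd_left b d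
  have hgd : g ∣ d := hg ▸ Nat.gcd_dvd_right b d
  set m := (n - 1) / d with hm
  have hn1 : n - 1 = d * m := (Nat.mul_div_cancel' hdn).symm
  have hnm : n = d * m + 1 := by omega
  set e := d / g with he
  have hde : d = e * g := (Nat.div_mul_cancel hgd).symm
  -- define S i
  set S : ℕ → Polynomial ℂ := fun i => ∑ j ∈ Finset.range b, (C (ω ^ i) * X) ^ j with hS
  have hSeq : ∀ i, (∑ j ∈ Finset.range b, C ((ω ^ i) ^ j) * X ^ j) = S i := by
    intro i
    apply Finset.sum_congr rfl
    intro j _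
    rw [mul_pow, ← C_pow]
  -- S is periodic with period d
  have hSper : ∀ i, S (i + d) = S i := by
    intro i
    simp only [hS, pow_add, hω.pow_eq_one, mul_one]
  -- key: (1 - C(ω^i)X) * S i = 1 - C((ω^b)^i) X^b
  have hkey : ∀ i, (1 - C (ω ^ i) * X) * S i = 1 - C ((ω ^ b) ^ i) * X ^ b := by
    intro i
    have hgs := geom_sum_mul (C (ω ^ i) * X) b
    have : (1 - C (ω ^ i) * X) * S i = -((S i) * (C (ω ^ i) * X - 1)) := by ring
    rw [this, hS]
    simp only [hgs]
    rw [mul_pow, ← C_pow, ← pow_mul, ← pow_mul, mul_comm i b]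
    ring
  -- ω^b is a primitive e-th root of unity
  have hωb : IsPrimitiveRoot (ω ^ b) e := by
    have h1 : IsPrimitiveRoot (ω ^ g) e := by
      apply hω.pow hd0
      rw [hde, mul_comm]
    have h2 : (ω ^ g) ^ (b / g) = ω ^ b := by
      rw [← pow_mul, Nat.mul_div_cancel' hgb]
    rw [← h2]
    apply h1.pow_of_coprime
    rw [he, hg]
    exact Nat.coprime_div_gcd_div_gcd (hg ▸ hg0)
  have he0 : 0 < e := by
    rcases Nat.eq_zero_or_pos e with h | h
    · rw [h, zero_mul] at hde; omega
    · exact h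
  -- the core identity: (1 - X^d) * ∏_{i<d} S i = (1 - X^(b*e))^g
  have hcore : (1 - X ^ d) * ∏ i ∈ Finset.range d, S i
      = (1 - (X : Polynomial ℂ) ^ (b * e)) ^ g := by
    have h1 : (1 - (X : Polynomial ℂ) ^ d) = ∏ i ∈ Finset.range d, (1 - C (ω ^ i) * X) := by
      have := prod_one_sub_poly d hd0 ω hω X
      simpa using this.symm
    rw [h1, ← Finset.prod_mul_distrib]
    simp only [hkey]
    -- now ∏_{i<d} (1 - C((ω^b)^i) X^b), with (ω^b) of order e, d = e*g
    have hper : ∀ i, (fun i => 1 - C ((ω ^ b) ^ i) * (X : Polynomial ℂ) ^ b) (i + e)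
        = 1 - C ((ω ^ b) ^ i) * X ^ b := by
      intro i
      simp only [pow_add, hωb.pow_eq_one, mul_one]
    calc ∏ i ∈ Finset.range d, (1 - C ((ω ^ b) ^ i) * (X : Polynomial ℂ) ^ b)
        = (∏ i ∈ Finset.range e, (1 - C ((ω ^ b) ^ i) * (X : Polynomial ℂ) ^ b)) ^ g := by
          rw [hde]
          exact prod_periodic _ e hper g
      _ = (1 - ((X : Polynomial ℂ) ^ b) ^ e) ^ g := by
          rw [prod_one_sub_poly e he0 (ω ^ b) hωb (X ^ b)]
      _ = (1 - (X : Polynomial ℂ) ^ (b * e)) ^ g := by rw [← pow_mul]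
  -- now assemble
  have hbe : b * d / g = b * e := by
    rw [he, Nat.mul_div_assoc b hgd]
  simp only [hSeq]
  rw [hnm, Finset.prod_range_succ, prod_periodic S d hSper m]
  have hSlast : S (d * m) = ∑ j ∈ Finset.range b, (X : Polynomial ℂ) ^ j := by
    simp only [hS, pow_mul, hω.pow_eq_one, one_pow, one_mul, C_1]
  rw [hSlast, hbe]
  calc (1 - (X:Polynomial ℂ) ^ d) ^ m * ((∏ i ∈ Finset.range d, S i) ^ m *
        ∑ j ∈ Finset.range b, (X : Polynomial ℂ) ^ j)
      = (∑ j ∈ Finset.range b, (X : Polynomial ℂ) ^ j) *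
        ((1 - X ^ d) * ∏ i ∈ Finset.range d, S i) ^ m := by rw [mul_pow]; ring
    _ = (∑ j ∈ Finset.range b, (X : Polynomial ℂ) ^ j) *
        (1 - (X:Polynomial ℂ) ^ (b * e)) ^ (g * m) := by rw [hcore, ← pow_mul, mul_comm g m, pow_mul]
end

section
/- Let b ≥ 2, d ≥ 1, n ≥ 1 be integers with d dividing n − 1 and gcd(b, d) = 1, let ω ∈ ℂ be a primitive d-th root of unity, and let k ≥ 0. Then the coefficient of t^k in the polynomial ∏_{i=0}^{n−1} (1 + ω^i t + (ω^i t)^2 + ⋯ + (ω^i t)^(b−1)) ∈ ℂ[t] equals the sum over ℓ ∈ {0, 1, …, b−1} with d dividing k − ℓ of binom^{(b)}((n−1)/d, (k−ℓ)/d). -/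
open Polynomial Finset

lemma prodlin {d : ℕ} (hd : 0 < d) {η : ℂ} (hη : IsPrimitiveRoot η d) :
    ∏ i ∈ Finset.range d, ((C (η ^ i)) * X - 1) =
      C (∏ i ∈ Finset.range d, η ^ i) * (X ^ d - 1) := by
  have hη0 : η ≠ 0 := hη.ne_zero hd.ne'
  have h1 : ∀ i ∈ Finset.range d, (C (η ^ i)) * X - 1 = C (η ^ i) * (X - C ((η⁻¹) ^ i)) := by
    intro i _
    rw [mul_sub, ← C_mul, ← mul_pow, mul_inv_cancel₀ hη0, one_pow, C_1]
  rw [Finset.prod_congr rfl h1, Finset.prod_mul_distrib, ← map_prod]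
  congr 1
  have := X_pow_sub_C_eq_prod hη.inv hd (one_pow d)
  simp only [mul_one, C_1] at this
  exact this.symm

lemma evalsum0 {b : ℕ} (hb : 1 ≤ b) (f : ℕ → ℂ[X]) (hf : ∀ j, eval 0 (f j) = if j = 0 then 1 else 0) :
    eval 0 (∑ j ∈ Finset.range b, f j) = 1 := by
  rw [eval_finset_sum, Finset.sum_congr rfl fun j _ => hf j,
    Finset.sum_ite_eq' (Finset.range b) 0 fun _ => (1 : ℂ)]
  simp [Nat.lt_of_lt_of_le Nat.zero_lt_one hb]

lemma prodQ {b d : ℕ} (hb : 1 ≤ b) (hd : 0 < d) (hbd : Nat.gcd b d = 1) {ω : ℂ}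
    (hω : IsPrimitiveRoot ω d) :
    ∏ i ∈ Finset.range d, (∑ j ∈ Finset.range b, C ((ω ^ i) ^ j) * X ^ j) =
      ∑ j ∈ Finset.range b, (X ^ d) ^ j := by
  have hω0 : ω ≠ 0 := hω.ne_zero hd.ne'
  set η : ℂ := ω ^ b with hηdef
  have hη : IsPrimitiveRoot η d := hω.pow_of_coprime b hbd
  have step1 : ∀ i ∈ Finset.range d,
      (∑ j ∈ Finset.range b, C ((ω ^ i) ^ j) * X ^ j) * (C (ω ^ i) * X - 1)
        = C (η ^ i) * X ^ b - 1 := by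
    intro i _
    have h2 : (∑ j ∈ Finset.range b, C ((ω ^ i) ^ j) * X ^ j)
        = ∑ j ∈ Finset.range b, (C (ω ^ i) * X) ^ j := by
      refine Finset.sum_congr rfl fun j _ => ?_
      rw [mul_pow, ← C_pow]
    rw [h2, geom_sum_mul, mul_pow, ← C_pow, ← pow_mul, mul_comm i b, pow_mul]
  have hprod : (∏ i ∈ Finset.range d, (∑ j ∈ Finset.range b, C ((ω ^ i) ^ j) * X ^ j))
      * ∏ i ∈ Finset.range d, (C (ω ^ i) * X - 1)
      = ∏ i ∈ Finset.range d, (C (η ^ i) * X ^ b - 1) := by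
    rw [← Finset.prod_mul_distrib]
    exact Finset.prod_congr rfl step1
  have hcomp : ∏ i ∈ Finset.range d, (C (η ^ i) * X ^ b - 1)
      = C (∏ i ∈ Finset.range d, η ^ i) * (X ^ (d * b) - 1) := by
    have h3 : ∏ i ∈ Finset.range d, (C (η ^ i) * X ^ b - 1)
        = (∏ i ∈ Finset.range d, (C (η ^ i) * X - 1)).comp (X ^ b) := by
      rw [Polynomial.prod_comp]
      exact Finset.prod_congr rfl fun i _ => by simp
    rw [h3, prodlin hd hη, mul_comp, C_comp, sub_comp, pow_comp, X_comp, one_comp,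
      ← pow_mul, mul_comm b d]
  rw [prodlin hd hω, hcomp] at hprod
  have hgeo : (X ^ (d * b) - 1 : ℂ[X]) = (∑ j ∈ Finset.range b, (X ^ d) ^ j) * (X ^ d - 1) := by
    rw [geom_sum_mul, ← pow_mul]
  rw [hgeo] at hprod
  have hXd : (X ^ d - 1 : ℂ[X]) ≠ 0 := by
    have := (monic_X_pow_sub_C (1 : ℂ) hd.ne').ne_zero
    simpa using this
  have hcancel : (∏ i ∈ Finset.range d, (∑ j ∈ Finset.range b, C ((ω ^ i) ^ j) * X ^ j))
      * C (∏ i ∈ Finset.range d, ω ^ i)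
      = C (∏ i ∈ Finset.range d, η ^ i) * ∑ j ∈ Finset.range b, (X ^ d) ^ j := by
    apply mul_right_cancel₀ hXd
    rw [mul_assoc, mul_assoc]
    exact hprod
  have hL : eval 0 (∏ i ∈ Finset.range d, (∑ j ∈ Finset.range b, C ((ω ^ i) ^ j) * X ^ j)) = 1 := by
    rw [Polynomial.eval_prod]
    refine Finset.prod_eq_one fun i _ => ?_
    refine evalsum0 hb _ fun j => ?_
    rcases Nat.eq_zero_or_pos j with rfl | hj
    · simp
    · simp [zero_pow hj.ne', hj.ne']
  have hR : eval 0 (∑ j ∈ Finset.range b, ((X : ℂ[X]) ^ d) ^ j) = 1 := by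
    refine evalsum0 hb _ fun j => ?_
    rcases Nat.eq_zero_or_pos j with rfl | hj
    · simp
    · simp [zero_pow hj.ne', zero_pow hd.ne', hj.ne']
  have h0 := congrArg (eval 0) hcancel
  rw [eval_mul, eval_mul, eval_C, eval_C, hL, hR, one_mul, mul_one] at h0
  rw [← h0, mul_comm (C (∏ i ∈ Finset.range d, ω ^ i))] at hcancel
  have hcne : (C (∏ i ∈ Finset.range d, ω ^ i) : ℂ[X]) ≠ 0 := by
    rw [Ne, C_eq_zero]
    exact Finset.prod_ne_zero_iff.mpr fun i _ => pow_ne_zero _ hω0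
  exact mul_right_cancel₀ hcne hcancel

section helper
variable {b d : ℕ} {ω : ℂ}

lemma per (hω : IsPrimitiveRoot ω d) (b : ℕ) : ∀ M : ℕ,
    ∏ i ∈ Finset.range (d * M), (∑ j ∈ Finset.range b, C ((ω ^ i) ^ j) * X ^ j)
      = (∏ i ∈ Finset.range d, (∑ j ∈ Finset.range b, C ((ω ^ i) ^ j) * X ^ j)) ^ M := by
  intro M
  induction M with
  | zero => simp
  | succ M ih =>
    rw [Nat.mul_succ, Finset.prod_range_add, ih, pow_succ]
    congr 1
    refine Finset.prod_congr rfl fun i _ => ?_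
    rw [pow_add, pow_mul, hω.pow_eq_one, one_pow, one_mul]

lemma coeffA (hb : 1 ≤ b) (hd : 0 < d) (m s : ℕ) :
    ((∑ j ∈ Finset.range b, ((X : ℂ[X]) ^ d) ^ j) ^ m).coeff s
      = if d ∣ s then (binomB b m (s / d) : ℂ) else 0 := by
  have e1 : (∑ j ∈ Finset.range b, ((X : ℂ[X]) ^ d) ^ j)
      = expand ℂ d (∑ j ∈ Finset.range b, X ^ j) := by
    rw [map_sum]
    exact Finset.sum_congr rfl fun j _ => by rw [map_pow, expand_X]
  have e2 : (∑ j ∈ Finset.range b, (X : ℂ[X]) ^ j)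
      = Polynomial.map (Nat.castRingHom ℂ) (∑ j ∈ Finset.range b, (X : Polynomial ℕ) ^ j) := by
    rw [Polynomial.map_sum]
    simp
  rw [e1, ← map_pow, Polynomial.coeff_expand hd, e2, ← Polynomial.map_pow, Polynomial.coeff_map]
  rfl

end helper

/-- **Theorem (Main Theorem, part b).**
If `d ∣ (n-1)`, `gcd(b,d) = 1` and `ω` is a primitive `d`th root of unity, then the
coefficient of `t^k` in `∏_{i=0}^{n-1} (1 + ω^i t + ⋯ + (ω^i t)^(b-1))` equals
`∑_{ℓ=0}^{b-1, d ∣ k-ℓ} binom^(b)((n-1)/d, (k-ℓ)/d)`. -/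
theorem stmt_3 (b d n k : ℕ) (hb : 2 ≤ b) (hd : 1 ≤ d) (hn : 1 ≤ n) (hdn : d ∣ (n - 1))
    (hbd : Nat.gcd b d = 1) (ω : ℂ) (hω : IsPrimitiveRoot ω d) :
    (∏ i ∈ Finset.range n, (∑ j ∈ Finset.range b, C ((ω ^ i) ^ j) * X ^ j)).coeff k =
      ∑ ℓ ∈ Finset.range b,
        if ℓ ≤ k ∧ d ∣ (k - ℓ) then (binomB b ((n - 1) / d) ((k - ℓ) / d) : ℂ) else 0 := by
  have hb1 : 1 ≤ b := le_trans one_le_two hb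
  have hd0 : 0 < d := hd
  obtain ⟨m, hm⟩ := hdn
  have hn1 : n = d * m + 1 := by omega
  have hmd : (n - 1) / d = m := by rw [hm, Nat.mul_div_cancel_left m hd0]
  -- rewrite the product
  have hsplit : (∏ i ∈ Finset.range n, (∑ j ∈ Finset.range b, C ((ω ^ i) ^ j) * X ^ j))
      = (∑ j ∈ Finset.range b, ((X : ℂ[X]) ^ d) ^ j) ^ m * ∑ j ∈ Finset.range b, (X : ℂ[X]) ^ j := by
    rw [hn1, Finset.prod_range_succ, per hω b m, prodQ hb1 hd0 hbd hω]
    congr 1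
    refine Finset.sum_congr rfl fun j _ => ?_
    rw [pow_mul, hω.pow_eq_one, one_pow, one_pow, C_1, one_mul]
  rw [hsplit, hmd, mul_comm, Polynomial.coeff_mul,
    Finset.Nat.sum_antidiagonal_eq_sum_range_succ_mk]
  have hP : ∀ ℓ : ℕ, (∑ j ∈ Finset.range b, (X : ℂ[X]) ^ j).coeff ℓ
      = if ℓ < b then 1 else 0 := by
    intro ℓ
    rw [finset_sum_coeff]
    simp only [coeff_X_pow]
    rw [Finset.sum_ite_eq (Finset.range b) ℓ fun _ => (1 : ℂ)]
    simp
  calc ∑ ℓ ∈ Finset.range (k + 1),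
        (∑ j ∈ Finset.range b, (X : ℂ[X]) ^ j).coeff ℓ *
          ((∑ j ∈ Finset.range b, ((X : ℂ[X]) ^ d) ^ j) ^ m).coeff (k - ℓ)
      = ∑ ℓ ∈ Finset.range (k + 1),
          if ℓ < b ∧ d ∣ (k - ℓ) then (binomB b m ((k - ℓ) / d) : ℂ) else 0 := by
        refine Finset.sum_congr rfl fun ℓ _ => ?_
        rw [hP, coeffA hb1 hd0, ite_and]
        split_ifs <;> simp
    _ = ∑ ℓ ∈ Finset.range b,
          if ℓ ≤ k ∧ d ∣ (k - ℓ) then (binomB b m ((k - ℓ) / d) : ℂ) else 0 := by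
        rw [← Finset.sum_filter, ← Finset.sum_filter]
        apply Finset.sum_congr _ fun _ _ => rfl
        ext ℓ
        simp only [Finset.mem_filter, Finset.mem_range, Nat.lt_succ_iff]
        tauto
end

section
/- Let b ≥ 2, n ≥ 1, k ≥ 0, d ≥ 1 be integers with d dividing n and gcd(b, d) = 1, and let ω ∈ ℂ be a primitive d-th root of unity. Let X_b^n[k] be the set of tuples (x_1, …, x_n) ∈ {0, 1, …, b−1}^n with x_1 + ⋯ + x_n = k, and let ρ be the permutation of such tuples defined by ρ·(x_1, x_2, …, x_n) = (x_2, …, x_n, x_1). Then the coefficient of t^k in the polynomial ∏_{i=0}^{n−1} (1 + ω^i t + (ω^i t)^2 + ⋯ + (ω^i t)^(b−1)) ∈ ℂ[t] equals the number of elements of X_b^n[k] fixed by ρ^(n/d). -/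
open Polynomial Finset

private lemma prod_range_mul_periodic {M : Type*} [CommMonoid M] (f : ℕ → M) (m : ℕ)
    (hf : ∀ i, f (i + m) = f i) (a : ℕ) :
    ∏ i ∈ Finset.range (a * m), f i = (∏ i ∈ Finset.range m, f i) ^ a := by
  have hshift : ∀ j i : ℕ, f (i + j * m) = f i := by
    intro j
    induction j with
    | zero => simp
    | succ j ihj => intro i; rw [Nat.succ_mul, ← Nat.add_assoc, hf, ihj]
  induction a with
  | zero => simp
  | succ a ih =>
    rw [Nat.succ_mul, Finset.prod_range_add, ih, pow_succ]
    congr 1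
    exact Finset.prod_congr rfl fun i _ => by rw [Nat.add_comm, hshift]

private lemma sum_range_mul_periodic (f : ℕ → ℕ) (m : ℕ)
    (hf : ∀ i, f (i + m) = f i) (a : ℕ) :
    ∑ i ∈ Finset.range (a * m), f i = a * ∑ i ∈ Finset.range m, f i := by
  have hshift : ∀ j i : ℕ, f (i + j * m) = f i := by
    intro j
    induction j with
    | zero => simp
    | succ j ihj => intro i; rw [Nat.succ_mul, ← Nat.add_assoc, hf, ihj]
  induction a with
  | zero => simp
  | succ a ih =>
    rw [Nat.succ_mul, Finset.sum_range_add, ih, Nat.succ_mul]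
    congr 1
    exact Finset.sum_congr rfl fun i _ => by rw [Nat.add_comm, hshift]

private lemma prod_Y_sub (d : ℕ) (hd : 0 < d) (η : ℂ) (hη : IsPrimitiveRoot η d) (Y : ℂ[X]) :
    ∏ i ∈ Finset.range d, (Y - C (η ^ i)) = Y ^ d - 1 := by
  have h := X_pow_sub_C_eq_prod hη hd (one_pow d)
  calc ∏ i ∈ Finset.range d, (Y - C (η ^ i))
      = aeval Y (∏ i ∈ Finset.range d, ((X : ℂ[X]) - C (η ^ i * 1))) := by
        rw [map_prod]; exact Finset.prod_congr rfl fun i _ => by simp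
    _ = aeval Y ((X : ℂ[X]) ^ d - C 1) := by rw [← h]
    _ = Y ^ d - 1 := by simp

private lemma prod_CY_sub_one (d : ℕ) (hd : 0 < d) (η : ℂ) (hη : IsPrimitiveRoot η d)
    (Y : ℂ[X]) :
    ∏ i ∈ Finset.range d, (C (η ^ i) * Y - 1) =
      C (∏ i ∈ Finset.range d, η ^ i) * (Y ^ d - 1) := by
  have hη0 : η ≠ 0 := hη.ne_zero (by omega)
  have key : ∀ i, C (η ^ i) * Y - 1 = C (η ^ i) * (Y - C ((η⁻¹) ^ i)) := by
    intro i
    rw [mul_sub, ← C_mul, ← mul_pow, mul_inv_cancel₀ hη0, one_pow, map_one]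
  calc ∏ i ∈ Finset.range d, (C (η ^ i) * Y - 1)
      = ∏ i ∈ Finset.range d, (C (η ^ i) * (Y - C ((η⁻¹) ^ i))) :=
        Finset.prod_congr rfl fun i _ => key i
    _ = (∏ i ∈ Finset.range d, C (η ^ i)) *
          ∏ i ∈ Finset.range d, (Y - C ((η⁻¹) ^ i)) := Finset.prod_mul_distrib
    _ = C (∏ i ∈ Finset.range d, η ^ i) * (Y ^ d - 1) := by
        rw [map_prod, prod_Y_sub d hd η⁻¹ hη.inv Y]

private lemma key_prod (b d : ℕ) (hb : 2 ≤ b) (hd : 1 ≤ d) (hbd : Nat.gcd b d = 1)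
    (ω : ℂ) (hω : IsPrimitiveRoot ω d) :
    ∏ i ∈ Finset.range d, (∑ j ∈ Finset.range b, C ((ω ^ i) ^ j) * X ^ j) =
      ∑ j ∈ Finset.range b, (X : ℂ[X]) ^ (d * j) := by
  have hd0 : 0 < d := hd
  set u : ℂ := ∏ i ∈ Finset.range d, ω ^ i with hu
  -- u^(b-1) = 1
  have hsg : (∑ i ∈ Finset.range d, i) * 2 = d * (d - 1) := Finset.sum_range_id_mul_two d
  have heven : 2 ∣ (d - 1) * (b - 1) := by
    rcases Nat.even_or_odd d with he | ho
    · have hb2 : ¬ (2 ∣ b) := by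
        intro h2b
        have : (2 : ℕ) ∣ Nat.gcd b d := Nat.dvd_gcd h2b he.two_dvd
        omega
      have : 2 ∣ (b - 1) := by omega
      exact Dvd.dvd.mul_left this _
    · have : 2 ∣ (d - 1) := by
        rcases ho with ⟨c, hc⟩; omega
      exact Dvd.dvd.mul_right this _
  obtain ⟨c, hc⟩ := heven
  have hdvd : d ∣ (∑ i ∈ Finset.range d, i) * (b - 1) := by
    refine ⟨c, Nat.eq_of_mul_eq_mul_left (by norm_num : 0 < 2) ?_⟩
    calc 2 * ((∑ i ∈ Finset.range d, i) * (b - 1))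
        = ((∑ i ∈ Finset.range d, i) * 2) * (b - 1) := by ring
      _ = d * ((d - 1) * (b - 1)) := by rw [hsg]; ring
      _ = d * (2 * c) := by rw [hc]
      _ = 2 * (d * c) := by ring
  have hu1 : u ^ (b - 1) = 1 := by
    have hus : u = ω ^ (∑ i ∈ Finset.range d, i) := by
      rw [hu, ← Finset.prod_pow_eq_pow_sum]
    rw [hus, ← pow_mul]
    exact (hω.pow_eq_one_iff_dvd _).mpr hdvd
  have hu0 : u ≠ 0 := by
    intro h
    rw [h, zero_pow (by omega : b - 1 ≠ 0)] at hu1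
    exact zero_ne_one hu1
  -- rewrite factors as geometric sums
  have hrw : ∀ i, (∑ j ∈ Finset.range b, C ((ω ^ i) ^ j) * X ^ j : ℂ[X])
      = ∑ j ∈ Finset.range b, (C (ω ^ i) * X) ^ j := by
    intro i
    exact Finset.sum_congr rfl fun j _ => by rw [mul_pow, ← C_pow]
  set P : ℂ[X] := ∏ i ∈ Finset.range d, (∑ j ∈ Finset.range b, (C (ω ^ i) * X) ^ j) with hP
  have h1 : P * (∏ i ∈ Finset.range d, (C (ω ^ i) * X - 1)) =
      ∏ i ∈ Finset.range d, ((C (ω ^ i) * X) ^ b - 1) := by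
    rw [hP, ← Finset.prod_mul_distrib]
    exact Finset.prod_congr rfl fun i _ => geom_sum_mul _ _
  have h2 : ∏ i ∈ Finset.range d, (C (ω ^ i) * X - 1) = C u * ((X : ℂ[X]) ^ d - 1) :=
    prod_CY_sub_one d hd0 ω hω X
  have hωb : IsPrimitiveRoot (ω ^ b) d := hω.pow_of_coprime b hbd
  have h3 : ∏ i ∈ Finset.range d, ((C (ω ^ i) * X) ^ b - 1)
      = C (u ^ b) * (((X : ℂ[X]) ^ b) ^ d - 1) := by
    have e1 : ∀ i, ((C (ω ^ i) * X) ^ b : ℂ[X]) = C ((ω ^ b) ^ i) * X ^ b := by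
      intro i
      rw [mul_pow, ← C_pow, ← pow_mul, ← pow_mul, Nat.mul_comm]
    have e2 : u ^ b = ∏ i ∈ Finset.range d, (ω ^ b) ^ i := by
      rw [hu, ← Finset.prod_pow]
      exact Finset.prod_congr rfl fun i _ => by rw [← pow_mul, ← pow_mul, Nat.mul_comm]
    calc ∏ i ∈ Finset.range d, ((C (ω ^ i) * X) ^ b - 1)
        = ∏ i ∈ Finset.range d, (C ((ω ^ b) ^ i) * X ^ b - 1) :=
          Finset.prod_congr rfl fun i _ => by rw [e1]
      _ = C (∏ i ∈ Finset.range d, (ω ^ b) ^ i) * (((X : ℂ[X]) ^ b) ^ d - 1) :=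
          prod_CY_sub_one d hd0 (ω ^ b) hωb (X ^ b)
      _ = C (u ^ b) * (((X : ℂ[X]) ^ b) ^ d - 1) := by rw [e2]
  have hub : u ^ b = u := by
    have : u ^ b = u ^ (b - 1) * u := by
      rw [← pow_succ]
      congr 1
      omega
    rw [this, hu1, one_mul]
  have hmain : C u * (P * ((X : ℂ[X]) ^ d - 1)) = C u * (((X : ℂ[X]) ^ b) ^ d - 1) := by
    calc C u * (P * ((X : ℂ[X]) ^ d - 1)) = P * (C u * ((X : ℂ[X]) ^ d - 1)) := by ring
      _ = P * (∏ i ∈ Finset.range d, (C (ω ^ i) * X - 1)) := by rw [h2]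
      _ = ∏ i ∈ Finset.range d, ((C (ω ^ i) * X) ^ b - 1) := h1
      _ = C (u ^ b) * (((X : ℂ[X]) ^ b) ^ d - 1) := h3
      _ = C u * (((X : ℂ[X]) ^ b) ^ d - 1) := by rw [hub]
  have hcancel : P * ((X : ℂ[X]) ^ d - 1) = ((X : ℂ[X]) ^ b) ^ d - 1 :=
    mul_left_cancel₀ (by simpa using hu0) hmain
  have hgeomQ : (∑ j ∈ Finset.range b, ((X : ℂ[X]) ^ d) ^ j) * ((X : ℂ[X]) ^ d - 1)
      = ((X : ℂ[X]) ^ b) ^ d - 1 := by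
    rw [geom_sum_mul, ← pow_mul, ← pow_mul, Nat.mul_comm]
  have hXd : ((X : ℂ[X]) ^ d - 1) ≠ 0 := by
    have := X_pow_sub_C_ne_zero (R := ℂ) hd0 1
    simpa using this
  have : P = ∑ j ∈ Finset.range b, ((X : ℂ[X]) ^ d) ^ j :=
    mul_right_cancel₀ hXd (by rw [hcancel, hgeomQ])
  calc ∏ i ∈ Finset.range d, (∑ j ∈ Finset.range b, C ((ω ^ i) ^ j) * X ^ j)
      = P := Finset.prod_congr rfl fun i _ => hrw i
    _ = ∑ j ∈ Finset.range b, ((X : ℂ[X]) ^ d) ^ j := this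
    _ = ∑ j ∈ Finset.range b, (X : ℂ[X]) ^ (d * j) :=
        Finset.sum_congr rfl fun j _ => by rw [← pow_mul]

/-- The fixed points of `ρ^(n/d)` are counted by functions `Fin (n/d) → Fin b` with
`d * sum = k`. -/
private lemma fixed_card (b d n k : ℕ) (hd : 1 ≤ d) (hn : 1 ≤ n) (hdn : d ∣ n) :
    Nat.card {x : Fin n → Fin b //
        (∑ i, (x i : ℕ)) = k ∧
        ∀ i : Fin n, x ⟨((i : ℕ) + n / d) % n, Nat.mod_lt _ (by omega)⟩ = x i} =
    (Finset.univ.filter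
      (fun y : Fin (n / d) → Fin b => d * ∑ i, (y i : ℕ) = k)).card := by
  have hdm : d * (n / d) = n := Nat.mul_div_cancel' hdn
  have hm0 : 0 < n / d := Nat.div_pos (Nat.le_of_dvd (by omega) hdn) (by omega)
  have hmn : n / d ≤ n := Nat.div_le_self n d
  have hmdvd : n / d ∣ n := Nat.div_dvd_of_dvd hdn
  have hlt : ∀ i : ℕ, i % (n / d) < n := fun i => lt_of_lt_of_le (Nat.mod_lt i hm0) hmn
  -- summation lemma
  have hsum : ∀ z : Fin (n / d) → Fin b,
      (∑ i : Fin n, ((z ⟨(i : ℕ) % (n / d), Nat.mod_lt _ hm0⟩ : Fin b) : ℕ))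
        = d * ∑ j : Fin (n / d), ((z j : ℕ)) := by
    intro z
    have e1 : (∑ i : Fin n, ((z ⟨(i : ℕ) % (n / d), Nat.mod_lt _ hm0⟩ : Fin b) : ℕ))
        = ∑ i ∈ Finset.range n, ((z ⟨i % (n / d), Nat.mod_lt _ hm0⟩ : Fin b) : ℕ) :=
      Fin.sum_univ_eq_sum_range (fun i => ((z ⟨i % (n / d), Nat.mod_lt _ hm0⟩ : Fin b) : ℕ)) n
    have e2 : ∑ i ∈ Finset.range n, ((z ⟨i % (n / d), Nat.mod_lt _ hm0⟩ : Fin b) : ℕ)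
        = d * ∑ i ∈ Finset.range (n / d), ((z ⟨i % (n / d), Nat.mod_lt _ hm0⟩ : Fin b) : ℕ) := by
      have h := sum_range_mul_periodic
        (fun i => ((z ⟨i % (n / d), Nat.mod_lt _ hm0⟩ : Fin b) : ℕ)) (n / d)
        (fun i => congrArg (fun w : Fin b => (w : ℕ))
          (congrArg z (Fin.ext (Nat.add_mod_right i (n / d))))) d
      rwa [hdm] at h
    have e3 : ∑ i ∈ Finset.range (n / d), ((z ⟨i % (n / d), Nat.mod_lt _ hm0⟩ : Fin b) : ℕ)
        = ∑ j : Fin (n / d), ((z j : ℕ)) := by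
      rw [← Fin.sum_univ_eq_sum_range
        (fun i => ((z ⟨i % (n / d), Nat.mod_lt _ hm0⟩ : Fin b) : ℕ)) (n / d)]
      exact Finset.sum_congr rfl fun j _ =>
        congrArg (fun w : Fin b => (w : ℕ)) (congrArg z (Fin.ext (Nat.mod_eq_of_lt j.2)))
    rw [e1, e2, e3]
  -- key claim: periodic tuples satisfy x i = x (i % (n/d))
  have hclaim : ∀ (x : Fin n → Fin b)
      (_hx : ∀ i : Fin n, x ⟨((i : ℕ) + n / d) % n, Nat.mod_lt _ (by omega)⟩ = x i)
      (i : ℕ) (hi : i < n), x ⟨i, hi⟩ = x ⟨i % (n / d), hlt i⟩ := by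
    intro x hx i
    induction i using Nat.strong_induction_on with
    | _ i ih =>
      intro hi
      by_cases h : i < n / d
      · exact congrArg x (Fin.ext (Nat.mod_eq_of_lt h).symm)
      · push_neg at h
        have h1 : i - n / d < n := by omega
        have h3 : ((i - n / d : ℕ) + n / d) % n = i := by
          have hh : (i - n / d) + n / d = i := by omega
          rw [hh, Nat.mod_eq_of_lt hi]
        have h2 := hx ⟨i - n / d, h1⟩
        have h4 : x ⟨i, hi⟩ = x ⟨i - n / d, h1⟩ := by
          rw [← h2]
          exact congrArg x (Fin.ext h3.symm)
        have h5 := ih (i - n / d) (by omega) h1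
        rw [h4, h5]
        exact congrArg x (Fin.ext (Nat.mod_eq_sub_mod h).symm)
  -- the equivalence
  have e : {x : Fin n → Fin b //
        (∑ i, (x i : ℕ)) = k ∧
        ∀ i : Fin n, x ⟨((i : ℕ) + n / d) % n, Nat.mod_lt _ (by omega)⟩ = x i}
      ≃ {y : Fin (n / d) → Fin b // d * ∑ i, (y i : ℕ) = k} := by
    refine
      { toFun := fun x => ⟨fun j => x.1 ⟨(j : ℕ), lt_of_lt_of_le j.2 hmn⟩, ?_⟩
        invFun := fun y => ⟨fun i => y.1 ⟨(i : ℕ) % (n / d), Nat.mod_lt _ hm0⟩, ?_, ?_⟩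
        left_inv := ?_
        right_inv := ?_ }
    · -- d * sum = k for toFun
      have h := hsum (fun j => x.1 ⟨(j : ℕ), lt_of_lt_of_le j.2 hmn⟩)
      have hA : (∑ i : Fin n, ((x.1 ⟨(i : ℕ) % (n / d), hlt (i : ℕ)⟩ : Fin b) : ℕ))
          = ∑ i : Fin n, ((x.1 i : Fin b) : ℕ) :=
        Finset.sum_congr rfl fun i _ =>
          congrArg (fun w : Fin b => (w : ℕ)) (hclaim x.1 x.2.2 (i : ℕ) i.2).symm
      exact h.symm.trans (hA.trans x.2.1)
    · -- sum condition for invFun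
      exact (hsum y.1).trans y.2
    · -- periodicity for invFun
      intro i
      have hval : (((i : ℕ) + n / d) % n) % (n / d) = (i : ℕ) % (n / d) := by
        rw [Nat.mod_mod_of_dvd _ hmdvd, Nat.add_mod_right]
      exact congrArg y.1 (Fin.ext hval)
    · -- left inverse
      rintro ⟨x, hxs, hxp⟩
      refine Subtype.ext (funext fun i => ?_)
      exact (hclaim x hxp (i : ℕ) i.2).symm
    · -- right inverse
      rintro ⟨y, hy⟩
      refine Subtype.ext (funext fun j => ?_)
      exact congrArg y (Fin.ext (Nat.mod_eq_of_lt j.2))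
  rw [Nat.card_congr e, Nat.card_eq_fintype_card, Fintype.card_subtype]

/-- **Theorem (Cyclic Sieving, rotation case, algebraic side).**
If `d ∣ n`, `gcd(b,d) = 1` and `ω` is a primitive `d`th root of unity, then the coefficient
of `t^k` in `∏_{i=0}^{n-1} (1 + ω^i t + ⋯ + (ω^i t)^(b-1))` equals the number of tuples
`(x_1, …, x_n) ∈ {0, …, b-1}^n` with `∑ x_i = k` that are fixed by the `(n/d)`-th power of
the cyclic rotation `ρ·(x_1,…,x_n) = (x_2,…,x_n,x_1)`, i.e. tuples with
`x_{i + n/d mod n} = x_i` for all `i`. -/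
theorem stmt_6 (b d n k : ℕ) (hb : 2 ≤ b) (hd : 1 ≤ d) (hn : 1 ≤ n) (hdn : d ∣ n)
    (hbd : Nat.gcd b d = 1) (ω : ℂ) (hω : IsPrimitiveRoot ω d) :
    (∏ i ∈ Finset.range n, (∑ j ∈ Finset.range b, C ((ω ^ i) ^ j) * X ^ j)).coeff k =
      (Nat.card {x : Fin n → Fin b //
        (∑ i, (x i : ℕ)) = k ∧
        ∀ i : Fin n, x ⟨((i : ℕ) + n / d) % n, Nat.mod_lt _ (by omega)⟩ = x i} : ℂ) := by
  have hdm : d * (n / d) = n := Nat.mul_div_cancel' hdn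
  -- Step 1: the product over range n collapses to a power
  have hper : ∀ i : ℕ,
      (∑ j ∈ Finset.range b, C ((ω ^ (i + d)) ^ j) * X ^ j : ℂ[X])
        = ∑ j ∈ Finset.range b, C ((ω ^ i) ^ j) * X ^ j := by
    intro i
    have : ω ^ (i + d) = ω ^ i := by
      rw [pow_add, hω.pow_eq_one, mul_one]
    rw [this]
  have hstep1 : (∏ i ∈ Finset.range n, (∑ j ∈ Finset.range b, C ((ω ^ i) ^ j) * X ^ j))
      = (∑ j ∈ Finset.range b, (X : ℂ[X]) ^ (d * j)) ^ (n / d) := by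
    have h := prod_range_mul_periodic
      (fun i => ∑ j ∈ Finset.range b, C ((ω ^ i) ^ j) * X ^ j) d hper (n / d)
    rw [show n / d * d = n from by rw [Nat.mul_comm]; exact hdm] at h
    rw [h, key_prod b d hb hd hbd ω hω]
  -- Step 2: coefficient extraction
  have hstep2 : ((∑ j ∈ Finset.range b, (X : ℂ[X]) ^ (d * j)) ^ (n / d)).coeff k
      = ((Finset.univ.filter
          (fun y : Fin (n / d) → Fin b => d * ∑ i, (y i : ℕ) = k)).card : ℂ) := by
    have hexp : ((∑ j ∈ Finset.range b, (X : ℂ[X]) ^ (d * j)) ^ (n / d))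
        = ∑ y ∈ (Finset.univ : Finset (Fin (n / d) → Fin b)),
            (X : ℂ[X]) ^ (d * ∑ i, ((y i : ℕ))) := by
      calc ((∑ j ∈ Finset.range b, (X : ℂ[X]) ^ (d * j)) ^ (n / d))
          = ∏ _i : Fin (n / d), (∑ j ∈ Finset.range b, (X : ℂ[X]) ^ (d * j)) := by
            rw [Finset.prod_const, Finset.card_univ, Fintype.card_fin]
        _ = ∏ _i : Fin (n / d), (∑ j : Fin b, (X : ℂ[X]) ^ (d * (j : ℕ))) := by
            refine Finset.prod_congr rfl fun i _ => ?_
            rw [Fin.sum_univ_eq_sum_range (fun j => (X : ℂ[X]) ^ (d * j)) b]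
        _ = ∑ y ∈ Fintype.piFinset (fun _ : Fin (n / d) => (Finset.univ : Finset (Fin b))),
              ∏ i : Fin (n / d), (X : ℂ[X]) ^ (d * ((y i : ℕ))) :=
            Finset.prod_univ_sum _ _
        _ = ∑ y ∈ (Finset.univ : Finset (Fin (n / d) → Fin b)),
              (X : ℂ[X]) ^ (d * ∑ i, ((y i : ℕ))) := by
            rw [Fintype.piFinset_univ]
            refine Finset.sum_congr rfl fun y _ => ?_
            rw [Finset.prod_pow_eq_pow_sum, Finset.mul_sum]
    rw [hexp, Polynomial.finset_sum_coeff]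
    have hco : ∀ y : Fin (n / d) → Fin b,
        ((X : ℂ[X]) ^ (d * ∑ i, ((y i : ℕ)))).coeff k
          = if d * ∑ i, ((y i : ℕ)) = k then (1 : ℂ) else 0 := by
      intro y
      rw [Polynomial.coeff_X_pow]
      simp [eq_comm]
    rw [Finset.sum_congr rfl fun y _ => hco y, Finset.sum_boole]
  rw [hstep1, hstep2, fixed_card b d n k hd hn hdn]
end

section
/- Let b ≥ 2, n ≥ 1, k ≥ 0, d ≥ 1 be integers with d dividing n. Let X_b^n[k] be the set of tuples (x_1, …, x_n) ∈ {0, 1, …, b−1}^n with x_1 + ⋯ + x_n = k, and let ρ be the permutation defined by ρ·(x_1, x_2, …, x_n) = (x_2, …, x_n, x_1). Then the number of elements of X_b^n[k] fixed by ρ^(n/d) equals binom^{(b)}(n/d, k/d) if d divides k, and equals 0 if d does not divide k. -/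
open Polynomial Finset

lemma binomB_eq_card (b m s : ℕ) :
    binomB b m s = Nat.card {y : Fin m → Fin b // (∑ i, (y i : ℕ)) = s} := by
  have h1 : ((∑ j ∈ Finset.range b, (X : Polynomial ℕ) ^ j)) ^ m
      = ∏ _i : Fin m, (∑ j ∈ Finset.range b, (X : Polynomial ℕ) ^ j) := by
    simp [Finset.prod_const]
  have h2 : binomB b m s =
      ((Fintype.piFinset (fun _ : Fin m => Finset.range b)).filter
        (fun g => ∑ i, g i = s)).card := by
    rw [binomB, h1, Finset.prod_univ_sum]
    simp only [Finset.prod_pow_eq_pow_sum, finset_sum_coeff, coeff_X_pow]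
    rw [Finset.card_filter]
    exact Finset.sum_congr rfl (fun g _ => by simp [eq_comm])
  rw [h2, Nat.card_eq_fintype_card, Fintype.card_subtype]
  apply Finset.card_bij' (fun g hg => fun i => (⟨g i, by
      simp only [Finset.mem_filter, Fintype.mem_piFinset, Finset.mem_range] at hg
      exact hg.1 i⟩ : Fin b))
    (fun y _ => fun i => (y i : ℕ))
  case hi =>
    intro g hg
    simp only [Finset.mem_filter, Fintype.mem_piFinset, Finset.mem_range] at hg ⊢
    exact ⟨Finset.mem_univ _, hg.2⟩
  case hj =>
    intro y hy
    simp only [Finset.mem_filter, Finset.mem_univ, true_and] at hy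
    simp [Fintype.mem_piFinset, hy, Fin.is_lt]
  case left_inv => intro g hg; rfl
  case right_inv => intro y hy; rfl

lemma sum_range_mul_mod (f : ℕ → ℕ) (c m : ℕ) :
    ∑ j ∈ Finset.range (c * m), f (j % m) = c * ∑ r ∈ Finset.range m, f r := by
  induction c with
  | zero => simp
  | succ c ih =>
    rw [Nat.succ_mul, Finset.sum_range_add, ih, Nat.succ_mul]
    congr 1
    exact Finset.sum_congr rfl fun j hj => by
      rw [Nat.add_comm, Nat.add_mul_mod_self_right,
        Nat.mod_eq_of_lt (Finset.mem_range.mp hj)]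

/-- **Theorem (Cyclic Sieving, rotation case, combinatorial side).**
If `d ∣ n`, the number of tuples `(x_1, …, x_n) ∈ {0, …, b-1}^n` with `∑ x_i = k` fixed by
the `(n/d)`-th power of the cyclic rotation `ρ` equals `binom^(b)(n/d, k/d)` when `d ∣ k`
and `0` otherwise. -/
theorem stmt_8 (b n k d : ℕ) (hb : 2 ≤ b) (hn : 1 ≤ n) (hd : 1 ≤ d) (hdn : d ∣ n) :
    Nat.card {x : Fin n → Fin b //
        (∑ i, (x i : ℕ)) = k ∧
        ∀ i : Fin n, x ⟨((i : ℕ) + n / d) % n, Nat.mod_lt _ (by omega)⟩ = x i} =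
      if d ∣ k then binomB b (n / d) (k / d) else 0 := by
  obtain ⟨m, rfl⟩ := hdn
  have hd0 : 0 < d := hd
  have hn0 : 0 < d * m := hn
  have hm : 0 < m := Nat.pos_of_ne_zero (fun h => by simp [h] at hn)
  have hmn : m ≤ d * m := Nat.le_mul_of_pos_left m hd0
  have hmv : d * m / d = m := Nat.mul_div_cancel_left m hd0
  simp only [hmv]
  -- periodicity
  have periodic : ∀ (x : Fin (d * m) → Fin b),
      (∀ i : Fin (d * m), x ⟨((i : ℕ) + m) % (d * m), Nat.mod_lt _ hn0⟩ = x i) →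
      ∀ j : ℕ, x ⟨j % (d * m), Nat.mod_lt _ hn0⟩
        = x ⟨j % m % (d * m), Nat.mod_lt _ hn0⟩ := by
    intro x hx j
    induction j using Nat.strong_induction_on with
    | _ j ih =>
      by_cases hj : j < m
      · rw [Nat.mod_eq_of_lt hj]
      · push_neg at hj
        have h1 : j % m = (j - m) % m := by
          conv_lhs => rw [← Nat.sub_add_cancel hj, Nat.add_mod_right]
        have h3 := hx ⟨(j - m) % (d * m), Nat.mod_lt _ hn0⟩
        have heq : ((j - m) % (d * m) + m) % (d * m) = j % (d * m) := by
          rw [Nat.mod_add_mod, Nat.sub_add_cancel hj]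
        have h2 : x ⟨j % (d * m), Nat.mod_lt _ hn0⟩
            = x ⟨(j - m) % (d * m), Nat.mod_lt _ hn0⟩ := by
          rw [← h3]
          exact congrArg x (Fin.ext heq.symm)
        rw [h2, ih (j - m) (by omega), h1]
  -- key sum identity for fixed tuples
  have sum_eq : ∀ (x : Fin (d * m) → Fin b),
      (∀ i : Fin (d * m), x ⟨((i : ℕ) + m) % (d * m), Nat.mod_lt _ hn0⟩ = x i) →
      (∑ i, (x i : ℕ))
        = d * ∑ r : Fin m, (x ⟨(r : ℕ), lt_of_lt_of_le r.2 hmn⟩ : ℕ) := by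
    intro x hx
    have hper := periodic x hx
    calc ∑ i : Fin (d * m), (x i : ℕ)
        = ∑ i : Fin (d * m), (x ⟨(i : ℕ) % (d * m), Nat.mod_lt _ hn0⟩ : ℕ) :=
          Finset.sum_congr rfl fun i _ => by
            exact congrArg _ (congrArg x (Fin.ext (Nat.mod_eq_of_lt i.2).symm))
      _ = ∑ j ∈ Finset.range (d * m),
            (x ⟨j % (d * m), Nat.mod_lt _ hn0⟩ : ℕ) :=
          Fin.sum_univ_eq_sum_range
            (fun j => (x ⟨j % (d * m), Nat.mod_lt _ hn0⟩ : ℕ)) (d * m)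
      _ = ∑ j ∈ Finset.range (d * m),
            (x ⟨j % m % (d * m), Nat.mod_lt _ hn0⟩ : ℕ) :=
          Finset.sum_congr rfl fun j _ => by rw [hper j]
      _ = d * ∑ r ∈ Finset.range m,
            (x ⟨r % (d * m), Nat.mod_lt _ hn0⟩ : ℕ) :=
          sum_range_mul_mod (fun j => (x ⟨j % (d * m), Nat.mod_lt _ hn0⟩ : ℕ)) d m
      _ = d * ∑ r : Fin m, (x ⟨(r : ℕ) % (d * m), Nat.mod_lt _ hn0⟩ : ℕ) := by
          rw [Fin.sum_univ_eq_sum_range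
            (fun r => (x ⟨r % (d * m), Nat.mod_lt _ hn0⟩ : ℕ)) m]
      _ = d * ∑ r : Fin m, (x ⟨(r : ℕ), lt_of_lt_of_le r.2 hmn⟩ : ℕ) := by
          congr 1
          exact Finset.sum_congr rfl fun r _ => by
            exact congrArg _ (congrArg x (Fin.ext
              (Nat.mod_eq_of_lt (lt_of_lt_of_le r.2 hmn))))
  rw [binomB_eq_card]
  by_cases hk : d ∣ k
  · simp only [hk, if_true]
    apply Nat.card_congr
    have hmdvd : m ∣ d * m := dvd_mul_left m d
    refine
      { toFun := fun x => ⟨fun r => x.1 ⟨(r : ℕ), lt_of_lt_of_le r.2 hmn⟩, ?_⟩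
        invFun := fun y =>
          ⟨fun i => y.1 ⟨(i : ℕ) % m, Nat.mod_lt _ hm⟩, ?_, ?_⟩
        left_inv := ?_
        right_inv := ?_ }
    · -- sum of restriction = k / d
      obtain ⟨x, hsum, hfix⟩ := x
      have h := sum_eq x hfix
      simp only
      rw [h] at hsum
      rw [← hsum, Nat.mul_div_cancel_left _ hd0]
    · -- sum of extension = k
      obtain ⟨y, hy⟩ := y
      have hfix : ∀ i : Fin (d * m),
          y ⟨((i : ℕ) + m) % (d * m) % m, Nat.mod_lt _ hm⟩
            = y ⟨(i : ℕ) % m, Nat.mod_lt _ hm⟩ := by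
        intro i
        apply congrArg y
        apply Fin.ext
        show ((i : ℕ) + m) % (d * m) % m = (i : ℕ) % m
        rw [Nat.mod_mod_of_dvd _ hmdvd, Nat.add_mod_right]
      have h := sum_eq (fun i => y ⟨(i : ℕ) % m, Nat.mod_lt _ hm⟩) hfix
      simp only at h ⊢
      rw [h]
      have h2 : ∑ r : Fin m,
          (y ⟨(r : ℕ) % m, Nat.mod_lt _ hm⟩ : ℕ) = ∑ r : Fin m, (y r : ℕ) :=
        Finset.sum_congr rfl fun r _ =>
          congrArg _ (congrArg y (Fin.ext (Nat.mod_eq_of_lt r.2)))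
      rw [h2, hy, Nat.mul_div_cancel' hk]
    · -- extension is fixed
      obtain ⟨y, hy⟩ := y
      intro i
      apply congrArg y
      apply Fin.ext
      show ((i : ℕ) + m) % (d * m) % m = (i : ℕ) % m
      rw [Nat.mod_mod_of_dvd _ hmdvd, Nat.add_mod_right]
    · -- left inverse
      rintro ⟨x, hsum, hfix⟩
      apply Subtype.ext
      funext i
      show x ⟨(i : ℕ) % m, lt_of_lt_of_le (Nat.mod_lt _ hm) hmn⟩ = x i
      have hper := periodic x hfix (i : ℕ)
      calc x ⟨(i : ℕ) % m, lt_of_lt_of_le (Nat.mod_lt _ hm) hmn⟩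
          = x ⟨(i : ℕ) % m % (d * m), Nat.mod_lt _ hn0⟩ :=
            congrArg x (Fin.ext (Nat.mod_eq_of_lt
              (lt_of_lt_of_le (Nat.mod_lt _ hm) hmn)).symm)
        _ = x ⟨(i : ℕ) % (d * m), Nat.mod_lt _ hn0⟩ := hper.symm
        _ = x i := congrArg x (Fin.ext (Nat.mod_eq_of_lt i.2))
    · -- right inverse
      rintro ⟨y, hy⟩
      apply Subtype.ext
      funext r
      show y ⟨(r : ℕ) % m, Nat.mod_lt _ hm⟩ = y r
      exact congrArg y (Fin.ext (Nat.mod_eq_of_lt r.2))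
  · simp only [hk, if_false]
    have : IsEmpty {x : Fin (d * m) → Fin b //
        (∑ i, (x i : ℕ)) = k ∧
        ∀ i : Fin (d * m), x ⟨((i : ℕ) + m) % (d * m), Nat.mod_lt _ hn0⟩ = x i} := by
      constructor
      rintro ⟨x, hsum, hfix⟩
      have h := sum_eq x hfix
      rw [hsum] at h
      exact hk ⟨_, h⟩
    exact Nat.card_of_isEmpty
end

section
/- Let b ≥ 2, n ≥ 2, k ≥ 0, d ≥ 1 be integers with d dividing n − 1. Let X_b^n[k] be the set of tuples (x_1, …, x_n) ∈ {0, 1, …, b−1}^n with x_1 + ⋯ + x_n = k, and let τ be the permutation defined by τ·(x_1, x_2, …, x_n) = (x_2, …, x_{n−1}, x_1, x_n). Then the number of elements of X_b^n[k] fixed by τ^((n−1)/d) equals the sum over ℓ ∈ {0, 1, …, b−1} with d dividing k − ℓ of binom^{(b)}((n−1)/d, (k−ℓ)/d). -/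
/-! Write `e = (n - 1) / d`. A tuple fixed by `τ^e` is `e`-periodic on its first
`n - 1 = d e` coordinates, so it is determined by a block `y ∈ {0, …, b-1}^e` together with
its last coordinate `ℓ`, and its coordinate sum is `d (y₁ + ⋯ + y_e) + ℓ`. For fixed `ℓ`, the
blocks with `d (y₁ + ⋯ + y_e) + ℓ = k` exist only when `d ∣ k - ℓ`, and are then the tuples
counted by `binom^(b)(e, (k - ℓ) / d)`. -/

open Polynomial Finset

theorem binomB_eq_card_s9 (b n k : ℕ) :
    binomB b n k = Fintype.card {x : Fin n → Fin b // ∑ i, (x i : ℕ) = k} := by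
  rw [binomB, ← Fin.sum_univ_eq_sum_range, ← Fin.prod_const, Fintype.prod_sum, finsetSum_coeff,
    Fintype.card_subtype, card_filter]
  refine sum_congr rfl fun x _ => ?_
  rw [prod_pow_eq_pow_sum, coeff_X_pow]
  exact if_congr eq_comm rfl rfl

section Counting

variable {A : Type*} [Fintype A]

theorem card_subtype_add_fin_eq (g : A → ℕ) (b k : ℕ) :
    Fintype.card {q : A × Fin b // g q.1 + q.2 = k} =
      ∑ ℓ ∈ range b, Fintype.card {a // g a + ℓ = k} := by
  simp only [Fintype.card_subtype, card_filter]
  rw [Fintype.sum_prod_type_right]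
  exact Fin.sum_univ_eq_sum_range (fun ℓ => ∑ a, if g a + ℓ = k then 1 else 0) b

theorem card_subtype_mul_add_eq (f : A → ℕ) {d : ℕ} (hd : 0 < d) (ℓ k : ℕ) :
    Fintype.card {a // d * f a + ℓ = k} =
      if ℓ ≤ k ∧ d ∣ k - ℓ then Fintype.card {a // f a = (k - ℓ) / d} else 0 := by
  split_ifs with h
  · obtain ⟨hℓ, c, hc⟩ := h
    refine Fintype.card_congr (Equiv.subtypeEquivRight fun a => ?_)
    have hcancel : d * f a = d * c ↔ f a = c := Nat.mul_left_cancel_iff hd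
    rw [hc, Nat.mul_div_cancel_left _ hd, ← hcancel]
    omega
  · rw [Fintype.card_eq_zero_iff]
    exact ⟨fun a => h ⟨by omega, f a, by omega⟩⟩

end Counting

section Rotation

variable {α : Type*}

def IsRotationFixed (m e : ℕ) (x : Fin (m + 1) → α) : Prop :=
  ∀ i : Fin (m + 1), (hi : (i : ℕ) < m) →
    x ⟨((i : ℕ) + e) % m, Nat.lt_succ_of_lt (Nat.mod_lt _ (Nat.zero_lt_of_lt hi))⟩ = x i

theorem IsRotationFixed.apply_eq_apply_mod {m e : ℕ} {x : Fin (m + 1) → α}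
    (hx : IsRotationFixed m e x) (i : ℕ) (hi : i < m) :
    x ⟨i, by omega⟩ = x ⟨i % e, by have := Nat.mod_le i e; omega⟩ := by
  rcases Nat.eq_zero_or_pos e with rfl | he
  · simp only [Nat.mod_zero]
  induction i using Nat.strong_induction_on with
  | _ i ih =>
    rcases lt_or_ge i e with h | h
    · simp only [Nat.mod_eq_of_lt h]
    · have hstep := hx ⟨i - e, by omega⟩ (show i - e < m by omega)
      simp only [Nat.sub_add_cancel h, Nat.mod_eq_of_lt hi] at hstep
      rw [hstep, ih (i - e) (by omega) (by omega)]
      exact congrArg x (Fin.ext (Nat.mod_eq_sub_mod h).symm)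

def rotationFixedEquiv {d : ℕ} (e : ℕ) (hd : 0 < d) :
    {x : Fin (d * e + 1) → α // IsRotationFixed (d * e) e x} ≃ (Fin e → α) × α where
  toFun x := (fun r => x.1 ⟨r, by nlinarith [r.isLt]⟩, x.1 (Fin.last _))
  invFun p := ⟨fun i => if h : (i : ℕ) < d * e then p.1 (Fin.modNat ⟨i, h⟩) else p.2,
    fun i hi => by
      have hlt : ((i : ℕ) + e) % (d * e) < d * e := Nat.mod_lt _ (Nat.zero_lt_of_lt hi)
      simp only [hlt, hi, dif_pos]
      refine congrArg p.1 (Fin.ext ?_)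
      simp [Fin.modNat, Nat.mod_mod_of_dvd _ (Dvd.intro_left d rfl)]⟩
  left_inv x := by
    ext i
    by_cases hi : (i : ℕ) < d * e
    · simp only [hi, dif_pos]
      exact (x.2.apply_eq_apply_mod i hi).symm
    · simp only [hi, dif_neg, not_false_eq_true]
      exact congrArg x.1 (Fin.ext (by simp only [Fin.val_last]; omega))
  right_inv p := by
    ext r
    · have hr : (r : ℕ) < d * e := by nlinarith [r.isLt]
      simp [hr, Fin.modNat, Nat.mod_eq_of_lt r.isLt]
    · simp

theorem sum_rotationFixedEquiv_symm {M : Type*} [AddCommMonoid M] (f : α → M) {d e : ℕ}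
    (hd : 0 < d) (p : (Fin e → α) × α) :
    ∑ i, f (((rotationFixedEquiv e hd).symm p).1 i) = d • ∑ r, f (p.1 r) + f p.2 := by
  have hinit : ∀ i : Fin (d * e),
      ((rotationFixedEquiv e hd).symm p).1 i.castSucc = p.1 i.modNat := fun i => dif_pos i.isLt
  have hlast : ((rotationFixedEquiv e hd).symm p).1 (Fin.last _) = p.2 := dif_neg (lt_irrefl _)
  rw [Fin.sum_univ_castSucc, hlast]
  simp only [hinit]
  rw [Fintype.sum_equiv finProdFinEquiv.symm _ (fun q => f (p.1 q.2))
      (fun i => by rw [finProdFinEquiv_symm_apply])]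
  simp only [Fintype.sum_prod_type, sum_const, card_univ, Fintype.card_fin]

theorem card_sum_eq_and_isRotationFixed (b : ℕ) {d : ℕ} (e k : ℕ) (hd : 0 < d) :
    Nat.card {x : Fin (d * e + 1) → Fin b //
        ∑ i, (x i : ℕ) = k ∧ IsRotationFixed (d * e) e x} =
      Fintype.card {p : (Fin e → Fin b) × Fin b // d * ∑ r, (p.1 r : ℕ) + p.2 = k} := by
  rw [← Nat.card_eq_fintype_card]
  refine Nat.card_congr ((Equiv.subtypeEquivRight fun _ => and_comm).trans
    ((Equiv.subtypeSubtypeEquivSubtypeInter _ _).symm.trans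
      ((rotationFixedEquiv e hd).subtypeEquiv fun x => ?_)))
  have hsum :=
    sum_rotationFixedEquiv_symm (fun a : Fin b => (a : ℕ)) hd (rotationFixedEquiv e hd x)
  rw [Equiv.symm_apply_apply, smul_eq_mul] at hsum
  rw [hsum]

/-- **Theorem (Cyclic Sieving, near-rotation case, combinatorial side).**
If `d ∣ (n-1)`, the number of tuples `(x_1, …, x_n) ∈ {0, …, b-1}^n` with `∑ x_i = k`
fixed by the `((n-1)/d)`-th power of the permutation `τ` which cyclically rotates the
first `n-1` coordinates and fixes the last equals
`∑_{ℓ=0}^{b-1, d ∣ k-ℓ} binom^(b)((n-1)/d, (k-ℓ)/d)`. -/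
theorem stmt_9 (b n k d : ℕ) (hn : 2 ≤ n) (hd : 1 ≤ d) (hdn : d ∣ (n - 1)) :
    Nat.card {x : Fin n → Fin b //
        (∑ i, (x i : ℕ)) = k ∧
        ∀ i : Fin n, (i : ℕ) < n - 1 →
          x ⟨((i : ℕ) + (n - 1) / d) % (n - 1),
              lt_trans (Nat.mod_lt _ (by omega)) (by omega)⟩ = x i} =
      ∑ ℓ ∈ Finset.range b,
        if ℓ ≤ k ∧ d ∣ (k - ℓ) then binomB b ((n - 1) / d) ((k - ℓ) / d) else 0 := by
  obtain ⟨e, he⟩ := hdn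
  obtain rfl : n = d * e + 1 := by omega
  simp only [Nat.add_sub_cancel, Nat.mul_div_cancel_left _ hd]
  refine (card_sum_eq_and_isRotationFixed b e k hd).trans ?_
  rw [card_subtype_add_fin_eq (fun y : Fin e → Fin b => d * ∑ r, (y r : ℕ))]
  refine sum_congr rfl fun ℓ _ => ?_
  rw [card_subtype_mul_add_eq _ hd, binomB_eq_card_s9]
end Rotation
end

section
/- Let f ∈ ℤ[z_1, …, z_n] be a symmetric polynomial (invariant under every permutation of the variables), let d ≥ 1 be an integer with d dividing n or d dividing n − 1, and let ω ∈ ℂ be a primitive d-th root of unity. Then the complex number f(1, ω, ω^2, …, ω^(n−1)) is an integer, i.e., there exists m ∈ ℤ with f(1, ω, …, ω^(n−1)) = m. -/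
open MvPolynomial

/-!
By the fundamental theorem of symmetric polynomials, `f` is an integer polynomial in the
elementary symmetric polynomials, so it suffices that these take integer values at
`(1, ω, …, ω^(n-1))`. Up to sign they are the coefficients of `∏ᵢ (X - ω^i)`, which is
`(X^d - 1)^q` when `n = q d` and `(X^d - 1)^q (X - 1)` when `n = q d + 1`.
-/

namespace MvPolynomial

variable {σ R S : Type*} [Fintype σ] [CommRing R] [CommRing S] [Algebra R S]

theorem symmetricSubalgebra_le_adjoin_esymm :
    symmetricSubalgebra σ R ≤
      Algebra.adjoin R (Set.range fun i : Fin (Fintype.card σ) => esymm σ R (i + 1)) := by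
  intro f hf
  obtain ⟨g, hg⟩ := esymmAlgHom_surjective (σ := σ) R le_rfl ⟨f, hf⟩
  rw [← aeval_range]
  exact (AlgHom.mem_range _).2 ⟨g, (esymmAlgHom_apply g).symm.trans (congrArg Subtype.val hg)⟩

theorem aeval_esymm_mem_of_coeff_mem {x : σ → S} {A : Subalgebra R S}
    (hx : ∀ j, (∏ i, (Polynomial.X - Polynomial.C (x i))).coeff j ∈ A)
    {k : ℕ} (hk : k ≤ Fintype.card σ) : aeval x (esymm σ R k) ∈ A := by
  set s := Finset.univ.val.map x
  have hcard : Multiset.card s = Fintype.card σ := by simp [s]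
  have hprod : (s.map fun t => Polynomial.X - Polynomial.C t).prod =
      ∏ i, (Polynomial.X - Polynomial.C (x i)) := by
    rw [Finset.prod_eq_multiset_prod, Multiset.map_map]
    rfl
  have hcoeff := Multiset.prod_X_sub_C_coeff s (k := Fintype.card σ - k) (by omega)
  rw [hprod, hcard, Nat.sub_sub_self hk] at hcoeff
  have hsign : ((-1 : S) ^ k) * (-1) ^ k = 1 := by rw [← mul_pow]; simp
  rw [aeval_esymm_eq_multiset_esymm, ← one_mul (s.esymm k), ← hsign, mul_assoc, ← hcoeff]
  exact A.mul_mem (A.pow_mem (A.neg_mem A.one_mem) k) (hx _)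

theorem IsSymmetric.aeval_mem_of_coeff_mem {f : MvPolynomial σ R} (hf : f.IsSymmetric)
    {x : σ → S} {A : Subalgebra R S}
    (hx : ∀ j, (∏ i, (Polynomial.X - Polynomial.C (x i))).coeff j ∈ A) : aeval x f ∈ A := by
  have hmem : aeval x f ∈ (Algebra.adjoin R _).map (aeval x) :=
    Subalgebra.mem_map.2 ⟨f, symmetricSubalgebra_le_adjoin_esymm hf, rfl⟩
  rw [AlgHom.map_adjoin, ← Set.range_comp] at hmem
  refine Algebra.adjoin_le ?_ hmem
  rintro _ ⟨i, rfl⟩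
  exact aeval_esymm_mem_of_coeff_mem hx i.isLt

end MvPolynomial

namespace IsPrimitiveRoot

variable {S : Type*} [CommRing S] [IsDomain S] {ω : S} {d : ℕ}

theorem prod_range_mul_X_sub_C_pow (hω : IsPrimitiveRoot ω d) (hd : 0 < d) (q : ℕ) :
    ∏ i ∈ Finset.range (q * d), (Polynomial.X - Polynomial.C (ω ^ i)) =
      (Polynomial.X ^ d - 1) ^ q := by
  induction q with
  | zero => simp
  | succ q ih =>
    have hperiodic : ∀ i, ω ^ (q * d + i) = ω ^ i := by
      intro i
      rw [pow_add, pow_mul', hω.pow_eq_one, one_pow, one_mul]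
    rw [Nat.succ_mul, Finset.prod_range_add, ih, pow_succ]
    simp only [hperiodic]
    congr 1
    simpa using (X_pow_sub_C_eq_prod hω hd (one_pow d)).symm

theorem prod_range_X_sub_C_mem_lifts {R : Type*} [CommRing R] [Algebra R S]
    (hω : IsPrimitiveRoot ω d) (hd : 0 < d) {n : ℕ} (hn : d ∣ n ∨ d ∣ n - 1) :
    ∏ i ∈ Finset.range n, (Polynomial.X - Polynomial.C (ω ^ i)) ∈
      Polynomial.lifts (algebraMap R S) := by
  rcases hn with ⟨q, rfl⟩ | ⟨q, hq⟩
  · rw [mul_comm, hω.prod_range_mul_X_sub_C_pow hd]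
    exact ⟨(Polynomial.X ^ d - 1) ^ q, by simp⟩
  · obtain rfl | hn := n.eq_zero_or_pos
    · simp
    obtain rfl : n = q * d + 1 := by rw [mul_comm, ← hq]; omega
    rw [Finset.prod_range_succ, hω.prod_range_mul_X_sub_C_pow hd, pow_mul', hω.pow_eq_one,
      one_pow]
    exact ⟨(Polynomial.X ^ d - 1) ^ q * (Polynomial.X - 1), by simp⟩

end IsPrimitiveRoot

/-- **Observation (Galois-theoretic integrality, part b).**
If `f ∈ ℤ[z_1, …, z_n]` is symmetric, `d ∣ n` or `d ∣ (n-1)`, and `ω` is a primitive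
`d`th root of unity, then `f(1, ω, …, ω^(n-1)) ∈ ℤ`. -/
theorem stmt_10 (n d : ℕ) (hd : 1 ≤ d) (hdvd : d ∣ n ∨ d ∣ (n - 1))
    (f : MvPolynomial (Fin n) ℤ) (hf : f.IsSymmetric)
    (ω : ℂ) (hω : IsPrimitiveRoot ω d) :
    ∃ m : ℤ, MvPolynomial.aeval (fun i : Fin n => ω ^ (i : ℕ)) f = (m : ℂ) := by
  have hcoeff : ∀ j, (∏ i : Fin n, (Polynomial.X - Polynomial.C (ω ^ (i : ℕ)))).coeff j ∈
      (⊥ : Subalgebra ℤ ℂ) := by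
    rw [Fin.prod_univ_eq_prod_range (fun i => Polynomial.X - Polynomial.C (ω ^ i)) n]
    exact (Polynomial.lifts_iff_coeff_lifts _).1 (hω.prod_range_X_sub_C_mem_lifts hd hdvd)
  obtain ⟨m, hm⟩ := Algebra.mem_bot.1 (hf.aeval_mem_of_coeff_mem hcoeff)
  exact ⟨m, by simpa using hm.symm⟩
end

section
/- Let f ∈ ℤ[z_1, …, z_n] be a symmetric polynomial (invariant under every permutation of the variables), let d ≥ 1 be an integer with d dividing n or d dividing n + 1, and let ω ∈ ℂ be a primitive d-th root of unity. Then the complex number f(ω, ω^2, …, ω^n) is an integer, i.e., there exists m ∈ ℤ with f(ω, ω^2, …, ω^n) = m. -/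
namespace Stmt11Aux

open Polynomial

variable {d : ℕ} {ω : ℂ}

lemma aux_base (hd : 1 ≤ d) (hω : IsPrimitiveRoot ω d) :
    ∏ i ∈ Finset.range d, (X - C (ω ^ i)) = X ^ d - C 1 := by
  have h1 := hω.nthRoots_eq (one_pow d)
  have hm : (X ^ d - C 1 : ℂ[X]).Monic :=
    monic_X_pow_sub_C _ (Nat.one_le_iff_ne_zero.mp hd)
  have hroots : (X ^ d - C 1 : ℂ[X]).roots = (Multiset.range d).map (ω ^ ·) := by
    rw [← nthRoots]
    simpa using h1
  have h2 := prod_multiset_X_sub_C_of_monic_of_roots_card_eq hm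
    (by simp only [hroots, Multiset.card_map, Multiset.card_range, natDegree_X_pow_sub_C])
  rw [hroots, Multiset.map_map] at h2
  rw [← h2, Finset.prod]
  simp [Function.comp]

lemma aux_pow (hd : 1 ≤ d) (hω : IsPrimitiveRoot ω d) (m : ℕ) :
    ∏ i ∈ Finset.range (d * m), (X - C (ω ^ i)) = (X ^ d - C 1) ^ m := by
  induction m with
  | zero => simp
  | succ m ih =>
    rw [Nat.mul_succ, Finset.prod_range_add, ih, pow_succ]
    congr 1
    rw [← aux_base hd hω]
    refine Finset.prod_congr rfl fun i _ => ?_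
    congr 1
    rw [pow_add, pow_mul, hω.pow_eq_one, one_pow, one_mul]

lemma aux_shift {N : ℕ} {f : ℕ → ℂ[X]} (h0 : f 0 ≠ 0) (hN : f N = f 0) :
    ∏ i ∈ Finset.range N, f (i + 1) = ∏ i ∈ Finset.range N, f i := by
  apply mul_left_cancel₀ h0
  rw [mul_comm, ← Finset.prod_range_succ' f N, Finset.prod_range_succ, hN, mul_comm]

lemma aux_prod (hd : 1 ≤ d) (hω : IsPrimitiveRoot ω d) {n : ℕ}
    (hdvd : d ∣ n ∨ d ∣ (n + 1)) :
    ∃ Q : ℤ[X], ∏ i ∈ Finset.range n, (X - C (ω ^ (i + 1))) =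
      Q.map (Int.castRingHom ℂ) := by
  have hne : (X - C 1 : ℂ[X]) ≠ 0 := X_sub_C_ne_zero 1
  rcases hdvd with ⟨m, rfl⟩ | ⟨m, hm⟩
  · refine ⟨(X ^ d - 1) ^ m, ?_⟩
    rw [aux_shift (f := fun i => X - C (ω ^ i))
        (by simpa using X_sub_C_ne_zero (R := ℂ) 1)
        (by simp only [pow_mul, hω.pow_eq_one, one_pow, pow_zero]),
      aux_pow hd hω m]
    simp [Polynomial.map_pow]
  · obtain ⟨m', rfl⟩ : ∃ m', m = m' + 1 := by
      rcases m with _ | m'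
      · omega
      · exact ⟨m', rfl⟩
    refine ⟨(X ^ d - 1) ^ m' * ∑ i ∈ Finset.range d, X ^ i, ?_⟩
    apply mul_right_cancel₀ hne
    have hA : ∏ i ∈ Finset.range (n + 1), (X - C (ω ^ i)) = (X ^ d - C 1) ^ (m' + 1) := by
      rw [hm]; exact aux_pow hd hω _
    rw [Finset.prod_range_succ'] at hA
    simp only [pow_zero] at hA
    rw [hA, pow_succ, Polynomial.map_mul, Polynomial.map_pow, Polynomial.map_sub,
      Polynomial.map_pow, Polynomial.map_one, Polynomial.map_X, Polynomial.map_sum]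
    simp only [Polynomial.map_pow, Polynomial.map_X, Polynomial.C_1]
    rw [mul_assoc, geom_sum_mul (X : ℂ[X]) d]

lemma aux_esymm (hd : 1 ≤ d) (hω : IsPrimitiveRoot ω d) {n : ℕ}
    (hdvd : d ∣ n ∨ d ∣ (n + 1)) {k : ℕ} (hk : k ≤ n) :
    ∃ c : ℤ, MvPolynomial.aeval (fun i : Fin n => ω ^ ((i : ℕ) + 1))
      (MvPolynomial.esymm (Fin n) ℤ k) = (c : ℂ) := by
  obtain ⟨Q, hQ⟩ := aux_prod hd hω hdvd
  have hcard :
      Multiset.card (Finset.univ.val.map (fun i : Fin n => ω ^ ((i : ℕ) + 1))) = n := by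
    simp
  have hprod : ((Finset.univ.val.map (fun i : Fin n => ω ^ ((i : ℕ) + 1))).map
        (fun t => X - C t)).prod = ∏ i ∈ Finset.range n, (X - C (ω ^ (i + 1))) := by
    rw [Multiset.map_map,
      ← Fin.prod_univ_eq_prod_range (fun i => X - C (ω ^ (i + 1))) n]
    rfl
  have hv := Multiset.prod_X_sub_C_coeff
    (Finset.univ.val.map fun i : Fin n => ω ^ ((i : ℕ) + 1))
    (k := n - k) (by rw [hcard]; omega)
  rw [hcard, show n - (n - k) = k by omega, hprod, hQ] at hv
  refine ⟨(-1) ^ k * Q.coeff (n - k), ?_⟩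
  rw [MvPolynomial.aeval_esymm_eq_multiset_esymm]
  have h3 : ((Finset.univ.val.map fun i : Fin n => ω ^ ((i : ℕ) + 1)).esymm k)
      = (-1 : ℂ) ^ k * (Q.map (Int.castRingHom ℂ)).coeff (n - k) := by
    rw [hv, ← mul_assoc, ← mul_pow]
    simp
  rw [h3, Polynomial.coeff_map]
  simp only [Int.coe_castRingHom]
  push_cast
  ring

lemma aux_cast {n : ℕ} (c : Fin n → ℤ) (p : MvPolynomial (Fin n) ℤ) :
    MvPolynomial.aeval (fun i => ((c i : ℤ) : ℂ)) p = ((MvPolynomial.aeval c p : ℤ) : ℂ) := by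
  induction p using MvPolynomial.induction_on with
  | C a => simp
  | add p q hp hq => simp [hp, hq]
  | mul_X p i hp => simp [hp]

end Stmt11Aux

open MvPolynomial

/-- **Observation (Galois-theoretic integrality, part c).**
If `f ∈ ℤ[z_1, …, z_n]` is symmetric, `d ∣ n` or `d ∣ (n+1)`, and `ω` is a primitive
`d`th root of unity, then `f(ω, ω^2, …, ω^n) ∈ ℤ`. -/
theorem stmt_11 (n d : ℕ) (hd : 1 ≤ d) (hdvd : d ∣ n ∨ d ∣ (n + 1))
    (f : MvPolynomial (Fin n) ℤ) (hf : f.IsSymmetric)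
    (ω : ℂ) (hω : IsPrimitiveRoot ω d) :
    ∃ m : ℤ, MvPolynomial.aeval (fun i : Fin n => ω ^ ((i : ℕ) + 1)) f = (m : ℂ) := by
  obtain ⟨g, hg⟩ := MvPolynomial.esymmAlgHom_surjective (σ := Fin n) (R := ℤ) (n := n)
    (by simp) ⟨f, (MvPolynomial.mem_symmetricSubalgebra _).mpr hf⟩
  have hgval : MvPolynomial.aeval (fun i : Fin n => esymm (Fin n) ℤ ((i : ℕ) + 1)) g = f := by
    have h := congrArg Subtype.val hg
    rwa [MvPolynomial.esymmAlgHom_apply] at h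
  have hch : ∀ i : Fin n, ∃ c : ℤ,
      MvPolynomial.aeval (fun j : Fin n => ω ^ ((j : ℕ) + 1))
        (esymm (Fin n) ℤ ((i : ℕ) + 1)) = (c : ℂ) := fun i =>
    Stmt11Aux.aux_esymm hd hω hdvd (by omega)
  choose c hc using hch
  refine ⟨MvPolynomial.aeval c g, ?_⟩
  rw [← hgval, ← AlgHom.comp_apply, MvPolynomial.comp_aeval]
  have hfun : (fun i : Fin n => MvPolynomial.aeval (fun j : Fin n => ω ^ ((j : ℕ) + 1))
      (esymm (Fin n) ℤ ((i : ℕ) + 1))) = fun i : Fin n => ((c i : ℤ) : ℂ) := by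
    funext i; exact hc i
  rw [hfun]
  exact Stmt11Aux.aux_cast c g
end

section
/- Let f ∈ ℤ[z_1, …, z_n] be a symmetric polynomial that is homogeneous of degree k, let d ≥ 1 be an integer with d dividing n but d not dividing k, and let ω ∈ ℂ be a primitive d-th root of unity. Then f(1, ω, ω^2, …, ω^(n−1)) = 0. -/
/-!
Multiplying every variable by `ω` multiplies a homogeneous `f` of degree `k` by `ω ^ k`. Since
`ω ^ n = 1`, this turns the point `(1, ω, …, ω^(n-1))` into its cyclic rotation, which a symmetric
`f` does not notice. Hence `f(1, ω, …) = ω ^ k f(1, ω, …)`, and `ω ^ k ≠ 1` forces the value to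
vanish.
-/

theorem pow_val_finRotate {M : Type*} [Monoid M] {ω : M} {n : ℕ} (hω : ω ^ n = 1) (i : Fin n) :
    ω ^ (finRotate n i : ℕ) = ω * ω ^ (i : ℕ) := by
  rw [← pow_succ']
  cases n with
  | zero => exact i.elim0
  | succ m =>
    rw [coe_finRotate]
    split_ifs with h
    · rw [h, Fin.val_last, pow_zero, hω]
    · rfl

namespace MvPolynomial

variable {σ R S : Type*} [CommSemiring R] [CommSemiring S] [Algebra R S]

theorem IsHomogeneous.aeval_smul {φ : MvPolynomial σ R} {n : ℕ} (hφ : φ.IsHomogeneous n)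
    (c : S) (x : σ → S) :
    MvPolynomial.aeval (c • x) φ = c ^ n * MvPolynomial.aeval x φ := by
  simp only [aeval_def, eval₂_eq, Finset.mul_sum]
  refine Finset.sum_congr rfl fun d hd => ?_
  have hdeg : d.degree = n := by
    by_contra h
    exact mem_support_iff.mp hd (hφ.coeff_eq_zero h)
  simp only [Pi.smul_apply, smul_eq_mul, mul_pow, Finset.prod_mul_distrib,
    Finset.prod_pow_eq_pow_sum, ← Finsupp.degree_apply, hdeg]
  ring

theorem IsSymmetric.aeval_comp_perm {φ : MvPolynomial σ R} (hφ : φ.IsSymmetric)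
    (e : Equiv.Perm σ) (x : σ → S) : aeval (x ∘ e) φ = aeval x φ := by
  rw [← aeval_rename, hφ e]

theorem IsSymmetric.aeval_pow_eq_zero [IsDomain S] {n k : ℕ} {φ : MvPolynomial (Fin n) R}
    (hsymm : φ.IsSymmetric) (hhom : φ.IsHomogeneous k) {ω : S} (hωn : ω ^ n = 1) (hωk : ω ^ k ≠ 1) :
    aeval (fun i : Fin n => ω ^ (i : ℕ)) φ = 0 := by
  set x : Fin n → S := fun i => ω ^ (i : ℕ)
  have hrotate : ω • x = x ∘ finRotate n := by
    ext i
    exact (pow_val_finRotate hωn i).symm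
  have hfixed : ω ^ k * aeval x φ = aeval x φ := by
    rw [← hhom.aeval_smul, hrotate, hsymm.aeval_comp_perm]
  exact (mul_left_eq_self₀.mp hfixed).resolve_left hωk

end MvPolynomial

theorem stmt_12_general (n d k : ℕ) (hdn : d ∣ n) (hdk : ¬ d ∣ k)
    (f : MvPolynomial (Fin n) ℤ) (hf : f.IsSymmetric) (hhom : f.IsHomogeneous k)
    (ω : ℂ) (hω : IsPrimitiveRoot ω d) :
    MvPolynomial.aeval (fun i : Fin n => ω ^ (i : ℕ)) f = 0 :=
  hf.aeval_pow_eq_zero hhom ((hω.pow_eq_one_iff_dvd n).mpr hdn)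
    (mt (hω.pow_eq_one_iff_dvd k).mp hdk)

/-- **Observation (vanishing of homogeneous specializations, part a).**
If `f ∈ ℤ[z_1, …, z_n]` is symmetric and homogeneous of degree `k`, `d ∣ n`, `d ∤ k`, and
`ω` is a primitive `d`th root of unity, then `f(1, ω, …, ω^(n-1)) = 0`. -/
theorem stmt_12 (n d k : ℕ) (hd : 1 ≤ d) (hdn : d ∣ n) (hdk : ¬ d ∣ k)
    (f : MvPolynomial (Fin n) ℤ) (hf : f.IsSymmetric) (hhom : f.IsHomogeneous k)
    (ω : ℂ) (hω : IsPrimitiveRoot ω d) :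
    MvPolynomial.aeval (fun i : Fin n => ω ^ (i : ℕ)) f = 0 :=
  stmt_12_general n d k hdn hdk f hf hhom ω hω
end

section
/- Fix integers n ≥ 1, b ≥ 2, k ≥ 0. In the multivariate polynomial ring ℤ[z_1, …, z_n], let h_k^{(b)} denote the sum of the monomials z_1^{x_1}⋯z_n^{x_n} over all tuples (x_1, …, x_n) ∈ {0, 1, …, b−1}^n with x_1 + ⋯ + x_n = k, let e_ℓ denote the elementary symmetric polynomial of degree ℓ in z_1, …, z_n, and let h_m denote the complete homogeneous symmetric polynomial of degree m in z_1, …, z_n (with h_m = 0 for m < 0). Then h_k^{(b)} = ∑_{ℓ ≥ 0} (−1)^ℓ · e_ℓ(z_1^b, …, z_n^b) · h_{k − bℓ}, where e_ℓ(z_1^b, …, z_n^b) denotes the polynomial obtained from e_ℓ by substituting z_i^b for z_i. -/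
/-!
Write `h_k^{(b)}` as the sum of `z^y` over the exponent vectors `y` of total degree `k` for which
the set `{i | b ≤ y i}` is empty. For a set `S` of indices, `(∏_{i ∈ S} z_i^b) h_{k - b|S|}` is the
sum of `z^y` over those `y` of degree `k` with `b ≤ y i` on `S` (shift `y` by `b` on `S`), and
`e_ℓ(z^b)` is the sum of `∏_{i ∈ S} z_i^b` over `|S| = ℓ`. Hence the right-hand side is
`∑_y (∑_{S ⊆ {i | b ≤ y i}} (-1)^|S|) z^y`, and the inner sum is `1` or `0` according as
`{i | b ≤ y i}` is empty or not.
-/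

open MvPolynomial Finset Finset.Nat

variable {R : Type*}

theorem Finset.sum_powerset_neg_one_pow_card' [Ring R] {α : Type*} [DecidableEq α]
    (T : Finset α) : ∑ S ∈ T.powerset, (-1 : R) ^ #S = if T = ∅ then 1 else 0 := by
  have := congrArg (Int.cast : ℤ → R) (sum_powerset_neg_one_pow_card (x := T))
  push_cast [apply_ite (Int.cast : ℤ → R)] at this
  exact this

theorem sum_neg_one_pow_card_mul_sum_filter [Ring R] {α ι : Type*} [Fintype α] [DecidableEq α]
    (A : Finset ι) (P : ι → α → Prop) [∀ y, DecidablePred (P y)]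
    [∀ S : Finset α, DecidablePred fun y => ∀ i ∈ S, P y i] [DecidablePred fun y => ∀ i, ¬ P y i]
    (f : ι → R) :
    ∑ S : Finset α, (-1) ^ #S * ∑ y ∈ A with ∀ i ∈ S, P y i, f y =
      ∑ y ∈ A with ∀ i, ¬ P y i, f y := by
  simp_rw [mul_sum, sum_filter]
  rw [sum_comm]
  refine sum_congr rfl fun y _ => ?_
  have hsub (S : Finset α) : (∀ i ∈ S, P y i) ↔ S ∈ (univ.filter (P y)).powerset := by
    simp [subset_iff]
  simp_rw [if_congr (hsub _) rfl rfl, ← sum_filter, filter_mem_eq_inter, univ_inter, ← sum_mul,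
    sum_powerset_neg_one_pow_card', filter_eq_empty_iff]
  simp

theorem sum_range_sum_powersetCard_univ {α M : Type*} [Fintype α] [AddCommMonoid M] {k : ℕ}
    (f : Finset α → M) (hf : ∀ S, k < #S → f S = 0) :
    ∑ ℓ ∈ range (k + 1), ∑ S ∈ powersetCard ℓ univ, f S = ∑ S, f S := by
  classical
  simp_rw [powersetCard_eq_filter, powerset_univ]
  rw [sum_fiberwise_eq_sum_filter]
  exact sum_filter_of_ne fun S _ hS => mem_range_succ_iff.2 (not_lt.1 (mt (hf S) hS))

theorem sum_fin_tuples_eq_sum_antidiagonalTuple {M : Type*} [AddCommMonoid M] {n b k : ℕ}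
    (f : (Fin n → ℕ) → M) :
    ∑ x : Fin n → Fin b with ∑ i, (x i : ℕ) = k, f (fun i => x i) =
      ∑ y ∈ antidiagonalTuple n k with ∀ i, ¬ b ≤ y i, f y := by
  refine sum_bij' (fun x _ i => x i) (fun y hy i => ⟨y i, not_le.1 ((mem_filter.1 hy).2 i)⟩)
    (fun x hx => ?_) (fun y hy => ?_) (fun _ _ => rfl) (fun _ _ => rfl) (fun _ _ => rfl)
  · simpa [mem_antidiagonalTuple] using hx
  · simpa [mem_antidiagonalTuple] using (mem_filter.1 hy).1

theorem antidiagonalTuple_filter_forall_le_eq_empty {n b k : ℕ} (S : Finset (Fin n))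
    (h : k < b * #S) : {y ∈ antidiagonalTuple n k | ∀ i ∈ S, b ≤ y i} = ∅ := by
  refine filter_eq_empty_iff.2 fun y hy hb => h.not_ge ?_
  calc b * #S = ∑ i ∈ S, b := by rw [sum_const, smul_eq_mul, mul_comm]
    _ ≤ ∑ i ∈ S, y i := sum_le_sum hb
    _ ≤ ∑ i, y i := sum_le_sum_of_subset (subset_univ S)
    _ = k := mem_antidiagonalTuple.1 hy

theorem hsymm_eq_sum_antidiagonalTuple [CommSemiring R] (n m : ℕ) :
    hsymm (Fin n) R m = ∑ y ∈ antidiagonalTuple n m, ∏ i, X i ^ y i := by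
  have hprod (s : Sym (Fin n) m) :
      ((s : Multiset (Fin n)).map X).prod = ∏ i, (X i : MvPolynomial (Fin n) R) ^ s.1.count i := by
    rw [prod_multiset_map_count]
    exact prod_subset (subset_univ _) fun i _ hi => by simp_all
  let e := Sym.equivNatSumOfFintype (Fin n) m
  have : Fintype { y : Fin n → ℕ // ∑ i, y i = m } := .ofEquiv _ e
  rw [hsymm, sum_subtype _ fun _ => mem_antidiagonalTuple, ← e.sum_comp]
  exact sum_congr rfl fun s _ => hprod s

theorem bind₁_X_pow_esymm [CommSemiring R] (σ : Type*) [Fintype σ] (b ℓ : ℕ) :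
    bind₁ (fun i : σ => (X i : MvPolynomial σ R) ^ b) (esymm σ R ℓ) =
      ∑ S ∈ powersetCard ℓ univ, ∏ i ∈ S, X i ^ b := by
  simp [esymm, map_sum, map_prod]

theorem prod_X_pow_mul_hsymm [CommSemiring R] {n b k : ℕ} (S : Finset (Fin n)) :
    (if b * #S ≤ k then (∏ i ∈ S, X i ^ b) * hsymm (Fin n) R (k - b * #S) else 0) =
      ∑ y ∈ antidiagonalTuple n k with ∀ i ∈ S, b ≤ y i, ∏ i, X i ^ y i := by
  split_ifs with h
  case neg => rw [antidiagonalTuple_filter_forall_le_eq_empty S (not_le.1 h), sum_empty]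
  set e : Fin n → ℕ := fun i => if i ∈ S then b else 0
  have he_sum : ∑ i, e i = b * #S := by simp [e, sum_ite_mem, mul_comm]
  have he_prod : ∏ i ∈ S, (X i : MvPolynomial (Fin n) R) ^ b = ∏ i, X i ^ e i := by
    simp [e, pow_ite, prod_ite_mem]
  rw [hsymm_eq_sum_antidiagonalTuple, mul_sum, he_prod]
  refine sum_nbij' (· + e) (· - e) (fun y hy => ?_) (fun y hy => ?_) (fun y _ => ?_)
    (fun y hy => ?_) (fun y _ => ?_)
  · simp_all [mem_antidiagonalTuple, sum_add_distrib, e]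
  · simp only [mem_filter, mem_antidiagonalTuple, Pi.sub_apply] at hy ⊢
    rw [sum_tsub_distrib _ fun i _ => ?_, hy.1, he_sum]
    by_cases hi : i ∈ S <;> simp [e, hi, hy.2]
  · simp
  · simp only [mem_filter] at hy
    ext i
    by_cases hi : i ∈ S <;> simp [e, hi, hy.2 i]
  · simp [← prod_mul_distrib, pow_add, mul_comm]

theorem ite_esymm_mul_hsymm_eq_sum_powersetCard [CommRing R] {n b k : ℕ} (ℓ : ℕ) :
    (if b * ℓ ≤ k then
        (-1) ^ ℓ * bind₁ (fun i : Fin n => X i ^ b) (esymm (Fin n) R ℓ) * hsymm (Fin n) R (k - b * ℓ)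
      else 0) =
      ∑ S ∈ powersetCard ℓ univ,
        (-1) ^ #S * ∑ y ∈ antidiagonalTuple n k with ∀ i ∈ S, b ≤ y i, ∏ i, X i ^ y i := by
  have hS : ∀ S ∈ powersetCard ℓ (univ : Finset (Fin n)),
      (-1) ^ #S * ∑ y ∈ antidiagonalTuple n k with ∀ i ∈ S, b ≤ y i, ∏ i, X i ^ y i =
        (-1) ^ ℓ * if b * ℓ ≤ k then (∏ i ∈ S, X i ^ b) * hsymm (Fin n) R (k - b * ℓ) else 0 := by
    intro S hS
    rw [← prod_X_pow_mul_hsymm, (mem_powersetCard.1 hS).2]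
  rw [sum_congr rfl hS, bind₁_X_pow_esymm]
  split_ifs
  · rw [mul_assoc, sum_mul, mul_sum]
  · simp

theorem stmt_13_general (n b k : ℕ) (hb : 2 ≤ b) :
    (∑ x ∈ Finset.univ.filter (fun x : Fin n → Fin b => (∑ i, (x i : ℕ)) = k),
        ∏ i, (X i : MvPolynomial (Fin n) ℤ) ^ (x i : ℕ)) =
      ∑ ℓ ∈ Finset.range (k + 1),
        if b * ℓ ≤ k then
          (-1) ^ ℓ * MvPolynomial.bind₁ (fun i : Fin n => (X i) ^ b)
              (MvPolynomial.esymm (Fin n) ℤ ℓ) *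
            MvPolynomial.hsymm (Fin n) ℤ (k - b * ℓ)
        else 0 := by
  have hlarge (S : Finset (Fin n)) (hS : k < #S) :
      (-1) ^ #S * ∑ y ∈ antidiagonalTuple n k with ∀ i ∈ S, b ≤ y i,
        ∏ i, (X i : MvPolynomial (Fin n) ℤ) ^ y i = 0 := by
    rw [antidiagonalTuple_filter_forall_le_eq_empty S (by nlinarith), sum_empty, mul_zero]
  rw [sum_congr rfl fun ℓ _ => ite_esymm_mul_hsymm_eq_sum_powersetCard ℓ,
    sum_range_sum_powersetCard_univ _ hlarge,
    sum_fin_tuples_eq_sum_antidiagonalTuple fun y => ∏ i, X i ^ y i,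
    sum_neg_one_pow_card_mul_sum_filter]

/-- **Lemma (inclusion–exclusion formula for bounded symmetric polynomials).**
In `ℤ[z_1, …, z_n]`, the `b`-bounded symmetric polynomial
`h_k^{(b)} = ∑ z_1^{x_1}⋯z_n^{x_n}` (sum over `(x_1,…,x_n) ∈ {0,…,b-1}^n` with
`∑ x_i = k`) equals `∑_{ℓ ≥ 0} (-1)^ℓ e_ℓ(z_1^b, …, z_n^b) h_{k-bℓ}`, where terms with
`k - bℓ < 0` vanish by convention. -/
theorem stmt_13 (n b k : ℕ) (hn : 1 ≤ n) (hb : 2 ≤ b) :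
    (∑ x ∈ Finset.univ.filter (fun x : Fin n → Fin b => (∑ i, (x i : ℕ)) = k),
        ∏ i, (X i : MvPolynomial (Fin n) ℤ) ^ (x i : ℕ)) =
      ∑ ℓ ∈ Finset.range (k + 1),
        if b * ℓ ≤ k then
          (-1) ^ ℓ * MvPolynomial.bind₁ (fun i : Fin n => (X i) ^ b)
              (MvPolynomial.esymm (Fin n) ℤ ℓ) *
            MvPolynomial.hsymm (Fin n) ℤ (k - b * ℓ)
        else 0 :=
  stmt_13_general n b k hb
end

section
/- Let b ≥ 2, d ≥ 1, n ≥ 1 be integers with d dividing n + 1, and let ω ∈ ℂ be a primitive d-th root of unity. Then ∏_{i=1}^{n} (1 + ω^i + ω^{2i} + ⋯ + ω^{(b−1)i}) equals b^((n+1)/d − 1) if gcd(b, d) = 1, and equals 0 if gcd(b, d) ≠ 1. -/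
open Finset

/-!
Write `f i = ∑_{j<b} ω^(ij)`; it is `d`-periodic with `f 0 = b`, and
`(1 - ω^i) f i = 1 - ω^(ib)`.
If `gcd(b, d) = 1`, then `ω^b` is again a primitive `d`-th root of unity, and
`∏_{0<i<d} (1 - ζ^i) = d` for every primitive `d`-th root `ζ`, so `∏_{0<i<d} f i = 1`.
By periodicity the product over `0 < i < n + 1 = d m` is then `b^(m-1)`.
If `g = gcd(b, d) > 1`, then for `i = d/g` we have `ω^i ≠ 1` but `ω^(ib) = 1`,
so the factor `f i` vanishes.
-/

section Periodic

variable {M : Type*} [CommMonoid M] {f : ℕ → M} {d : ℕ}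

theorem Function.Periodic.prod_range_mul (hf : Function.Periodic f d) (m : ℕ) :
    ∏ i ∈ range (d * m), f i = (∏ i ∈ range d, f i) ^ m := by
  induction m with
  | zero => simp
  | succ m ih =>
    rw [Nat.mul_succ, prod_range_add, ih, pow_succ]
    congr 1
    refine prod_congr rfl fun i _ => ?_
    rw [add_comm, mul_comm]
    exact hf.nat_mul m i

theorem Function.Periodic.prod_Ico_one_mul (hf : Function.Periodic f d) {m : ℕ}
    (hm : m ≠ 0) :
    ∏ i ∈ Ico 1 (d * m), f i =
      (∏ i ∈ Ico 1 d, f i) * (∏ i ∈ range d, f i) ^ (m - 1) := by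
  obtain ⟨m, rfl⟩ := Nat.exists_eq_add_one_of_ne_zero hm
  rcases Nat.eq_zero_or_pos d with rfl | hd
  · simp
  rw [Nat.add_sub_cancel, ← hf.prod_range_mul, Nat.mul_succ, add_comm,
    ← prod_Ico_consecutive _ hd (Nat.le_add_right d _), prod_Ico_eq_prod_range f d,
    Nat.add_sub_cancel_left]
  congr 1
  exact prod_congr rfl fun i _ => by rw [add_comm, hf i]

end Periodic

theorem periodic_sum_range_pow_mul_of_pow_eq_one {R : Type*} [CommSemiring R] {ω : R} {d : ℕ}
    (h : ω ^ d = 1) (b : ℕ) : Function.Periodic (fun i ↦ ∑ j ∈ range b, ω ^ (i * j)) d :=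
  fun i ↦ by simp only [add_mul, pow_add, pow_mul ω d, h, one_pow, mul_one]

namespace IsPrimitiveRoot

variable {R : Type*} [CommRing R] [IsDomain R] {ω : R} {d : ℕ}

theorem prod_Ico_one_sub_pow_eq_order {n : ℕ} (hω : IsPrimitiveRoot ω (n + 1)) :
    ∏ i ∈ Ico 1 (n + 1), (1 - ω ^ i) = n + 1 := by
  rw [prod_Ico_eq_prod_range, Nat.add_sub_cancel, ← hω.prod_one_sub_pow_eq_order]
  simp only [add_comm]

theorem prod_Ico_sum_range_pow_mul_eq_one (hω : IsPrimitiveRoot ω d) {b : ℕ}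
    (hb : b.Coprime d) : ∏ i ∈ Ico 1 d, ∑ j ∈ range b, ω ^ (i * j) = 1 := by
  cases d with
  | zero => simp
  | succ n =>
    have hωb := hω.pow_of_coprime b hb
    have hunits : ∏ i ∈ Ico 1 (n + 1), (1 - ω ^ i) ≠ 0 :=
      prod_ne_zero_iff.mpr fun i hi ↦ by
        obtain ⟨hi1, hin⟩ := mem_Ico.mp hi
        exact sub_ne_zero_of_ne (hω.pow_ne_one_of_pos_of_lt (by omega) hin).symm
    refine mul_right_cancel₀ hunits ?_
    calc (∏ i ∈ Ico 1 (n + 1), ∑ j ∈ range b, ω ^ (i * j)) *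
          ∏ i ∈ Ico 1 (n + 1), (1 - ω ^ i)
        = ∏ i ∈ Ico 1 (n + 1), (1 - (ω ^ b) ^ i) := by
          rw [← prod_mul_distrib]
          refine prod_congr rfl fun i _ => ?_
          rw [mul_comm]
          simp only [pow_mul]
          rw [mul_neg_geom_sum, pow_right_comm]
      _ = 1 * ∏ i ∈ Ico 1 (n + 1), (1 - ω ^ i) := by
          rw [hωb.prod_Ico_one_sub_pow_eq_order, hω.prod_Ico_one_sub_pow_eq_order, one_mul]

theorem sum_range_pow_div_mul_eq_zero (hω : IsPrimitiveRoot ω d) (hd : d ≠ 0) {b p : ℕ}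
    (hp : 1 < p) (hpb : p ∣ b) (hpd : p ∣ d) : ∑ j ∈ range b, ω ^ (d / p * j) = 0 := by
  have hne : ω ^ (d / p) ≠ 1 :=
    hω.pow_ne_one_of_pos_of_lt (Nat.div_ne_zero_iff_of_dvd hpd |>.mpr ⟨hd, by omega⟩)
      (Nat.div_lt_self (Nat.pos_of_ne_zero hd) hp)
  have hone : (ω ^ (d / p)) ^ b = 1 := by
    obtain ⟨c, rfl⟩ := hpb
    rw [← pow_mul, ← mul_assoc, Nat.div_mul_cancel hpd, pow_mul, hω.pow_eq_one, one_pow]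
  refine eq_zero_of_ne_zero_of_mul_left_eq_zero (sub_ne_zero_of_ne hne.symm) ?_
  simp only [pow_mul, mul_neg_geom_sum, hone, sub_self]

end IsPrimitiveRoot

theorem stmt_14_general (b d n : ℕ) (hdn : d ∣ (n + 1))
    (ω : ℂ) (hω : IsPrimitiveRoot ω d) :
    (∏ i ∈ Finset.Icc 1 n, ∑ j ∈ Finset.range b, ω ^ (i * j)) =
      if Nat.gcd b d = 1 then (b : ℂ) ^ ((n + 1) / d - 1) else 0 := by
  have hd : 0 < d := Nat.pos_of_dvd_of_pos hdn n.succ_pos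
  obtain ⟨m, hm⟩ := hdn
  have hm0 : m ≠ 0 := by rintro rfl; simp at hm
  split_ifs with hcop
  · have hf := periodic_sum_range_pow_mul_of_pow_eq_one hω.pow_eq_one b
    rw [← Ico_add_one_right_eq_Icc, hm, hf.prod_Ico_one_mul hm0, prod_range_eq_mul_Ico _ hd,
      hω.prod_Ico_sum_range_pow_mul_eq_one hcop, Nat.mul_div_cancel_left m hd]
    simp
  · have hg : 1 < b.gcd d := lt_of_le_of_ne (Nat.gcd_pos_of_pos_right b hd) (Ne.symm hcop)
    refine prod_eq_zero (i := d / b.gcd d) (mem_Icc.mpr ⟨?_, ?_⟩)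
      (hω.sum_range_pow_div_mul_eq_zero hd.ne' hg (Nat.gcd_dvd_left b d) (Nat.gcd_dvd_right b d))
    · exact Nat.div_pos (Nat.gcd_le_right (m := b) hd) (by omega)
    · have := Nat.div_lt_self hd hg
      have := Nat.le_of_dvd n.succ_pos ⟨m, hm⟩
      omega

/-- **Corollary (evaluation at t = 1, part c).**
If `d ∣ (n+1)` and `ω` is a primitive `d`th root of unity, then
`∏_{i=1}^{n} (1 + ω^i + ω^{2i} + ⋯ + ω^{(b-1)i})` equals `b^((n+1)/d - 1)` if
`gcd(b,d) = 1` and `0` otherwise. -/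
theorem stmt_14 (b d n : ℕ) (hb : 2 ≤ b) (hd : 1 ≤ d) (hn : 1 ≤ n) (hdn : d ∣ (n + 1))
    (ω : ℂ) (hω : IsPrimitiveRoot ω d) :
    (∏ i ∈ Finset.Icc 1 n, ∑ j ∈ Finset.range b, ω ^ (i * j)) =
      if Nat.gcd b d = 1 then (b : ℂ) ^ ((n + 1) / d - 1) else 0 :=
  stmt_14_general b d n hdn ω hω
end

section
/- Let b ≥ 1 and d ≥ 1 be integers with gcd(b, d) = 1. Let S_{b,d} = {s ∈ ℕ : s ≥ 1 and there are no k, ℓ ∈ ℕ with s = kb + ℓd}; this set is finite. Let S_{b,d}(t) = ∑_{s ∈ S_{b,d}} t^s ∈ ℤ[t]. Then in ℤ[t] one has the identity (1 − t^b)(1 − t^d) · (1 + (t − 1)·S_{b,d}(t)) = (1 − t^{bd})(1 − t). -/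
/-!
Write `R` for the set of nonnegative combinations of `b` and `d`, so that `S_{b,d}` is the
complement of `R` in `ℕ`. The elements `n ∈ R` with `n - d ∉ R` (the Apéry set of `R` with
respect to `d`) are exactly `0, b, 2b, …, (d-1)b`: they are pairwise incongruent modulo `d`.
Hence `S ⊔ {kb : k < d} = {0, …, d-1} ⊔ (S + d)`, i.e.
`S(t) + ∑_{k<d} t^{kb} = ∑_{j<d} t^j + t^d S(t)`, and multiplying by `(1 - t)(1 - t^b)`
turns both geometric sums into `1 - t^d` and `1 - t^{bd}`.
-/

open Polynomial Finset

def Representable (b d n : ℕ) : Prop := ∃ k ℓ : ℕ, n = k * b + ℓ * d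

def gaps (b d : ℕ) : Set ℕ := {s | 1 ≤ s ∧ ¬ Representable b d s}

section Representable

variable {b d n m k : ℕ}

theorem representable_zero : Representable b d 0 := ⟨0, 0, by simp⟩

theorem representable_mul (k : ℕ) : Representable b d (k * b) := ⟨k, 0, by simp⟩

theorem Representable.add_right (h : Representable b d n) : Representable b d (n + d) := by
  obtain ⟨k, ℓ, rfl⟩ := h
  exact ⟨k, ℓ + 1, by ring⟩

theorem mem_gaps_iff : n ∈ gaps b d ↔ ¬ Representable b d n := by
  refine ⟨And.right, fun h => ⟨Nat.one_le_iff_ne_zero.mpr ?_, h⟩⟩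
  rintro rfl
  exact h representable_zero

theorem representable_of_mul_le (hbd : Nat.Coprime b d) (hn : (b - 1) * (d - 1) ≤ n) :
    Representable b d n := by
  obtain ⟨k, ℓ, h⟩ := Nat.exists_add_mul_eq_of_gcd_dvd_of_mul_pred_le b d n
    (by simp [hbd.gcd_eq_one]) hn
  exact ⟨k, ℓ, h.symm⟩

theorem gaps_subset_range (hbd : Nat.Coprime b d) :
    gaps b d ⊆ ↑(range ((b - 1) * (d - 1))) := fun n hn => by
  by_contra hlt
  exact (mem_gaps_iff.mp hn) (representable_of_mul_le hbd (by simpa using hlt))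

theorem gaps_finite (hbd : Nat.Coprime b d) : (gaps b d).Finite :=
  (range _).finite_toSet.subset (gaps_subset_range hbd)

theorem not_representable_of_add_eq_mul (hbd : Nat.Coprime b d) (hk : k < d)
    (h : m + d = k * b) : ¬ Representable b d m := by
  rintro ⟨k', ℓ, rfl⟩
  have hmod : k * b ≡ k' * b [MOD d] := by
    rw [← h, show k' * b + ℓ * d + d = k' * b + (ℓ + 1) * d by ring]
    exact Nat.add_mul_modulus_modEq_iff.mpr rfl
  have hk' : k = k' % d := by
    rw [← Nat.mod_eq_of_lt hk]
    exact Nat.ModEq.cancel_right_of_coprime (Nat.coprime_comm.mp hbd) hmod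
  have : k * b ≤ k' * b := Nat.mul_le_mul_right b (hk' ▸ Nat.mod_le k' d)
  omega

theorem exists_lt_eq_mul_of_representable (hb : 0 < b) (hn : Representable b d n)
    (hmin : ∀ m, m + d = n → ¬ Representable b d m) : ∃ k < d, k * b = n := by
  obtain ⟨k, ℓ, rfl⟩ := hn
  cases ℓ with
  | zero =>
    refine ⟨k, ?_, by ring⟩
    by_contra! hkd
    refine hmin ((k - d) * b + (b - 1) * d) ?_ ⟨k - d, b - 1, rfl⟩
    zify [hkd, hb]
    ring
  | succ ℓ => exact absurd ⟨k, ℓ, rfl⟩ (hmin _ (by ring))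

end Representable

section GeneratingPolynomial

variable {b d : ℕ}

theorem mem_gaps_or_eq_mul_iff (hb : 0 < b) (hbd : Nat.Coprime b d) (n : ℕ) :
    (n ∈ gaps b d ∨ ∃ k < d, k * b = n) ↔ n < d ∨ ∃ m ∈ gaps b d, m + d = n := by
  simp only [mem_gaps_iff]
  constructor
  · rintro (hn | ⟨k, hk, rfl⟩)
    · refine (lt_or_ge n d).imp_right fun hdn => ⟨n - d, fun hm => hn ?_, by omega⟩
      simpa [Nat.sub_add_cancel hdn] using hm.add_right
    · refine (lt_or_ge (k * b) d).imp_right fun hdn => ⟨k * b - d, ?_, by omega⟩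
      exact not_representable_of_add_eq_mul hbd hk (by omega)
  · intro h
    by_cases hn : Representable b d n
    · refine Or.inr (exists_lt_eq_mul_of_representable hb hn fun m hm => ?_)
      rcases h with hnd | ⟨m', hm'_gap, rfl⟩
      · omega
      · rwa [Nat.add_right_cancel hm]
    · exact Or.inl hn

theorem sum_pow_gaps_add_sum_range {R : Type*} [CommSemiring R] (hb : 0 < b)
    (hbd : Nat.Coprime b d) (x : R) (hfin : (gaps b d).Finite) :
    ∑ s ∈ hfin.toFinset, x ^ s + ∑ k ∈ range d, x ^ (k * b) =
      ∑ j ∈ range d, x ^ j + x ^ d * ∑ s ∈ hfin.toFinset, x ^ s := by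
  have hunion : hfin.toFinset ∪ (range d).image (· * b) =
      range d ∪ hfin.toFinset.image (· + d) := by
    ext n
    simpa using mem_gaps_or_eq_mul_iff hb hbd n
  have hdisj_left : Disjoint hfin.toFinset ((range d).image (· * b)) := by
    simp only [Finset.disjoint_right, mem_image, Set.Finite.mem_toFinset, mem_gaps_iff]
    rintro _ ⟨k, -, rfl⟩ hk
    exact hk (representable_mul k)
  have hdisj_right : Disjoint (range d) (hfin.toFinset.image (· + d)) := by
    simp only [Finset.disjoint_right, mem_image, mem_range]
    omega
  rw [← sum_image fun _ _ _ _ => Nat.eq_of_mul_eq_mul_right hb, mul_sum,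
    ← sum_union hdisj_left, hunion, sum_union hdisj_right,
    sum_image fun _ _ _ _ => Nat.add_right_cancel]
  simp only [pow_add, mul_comm]

theorem one_sub_pow_mul_one_sub_pow_mul_gaps {R : Type*} [CommRing R] (hb : 0 < b)
    (hbd : Nat.Coprime b d) (x : R) (hfin : (gaps b d).Finite) :
    (1 - x ^ b) * (1 - x ^ d) * (1 + (x - 1) * ∑ s ∈ hfin.toFinset, x ^ s) =
      (1 - x ^ (b * d)) * (1 - x) := by
  have hkey := sum_pow_gaps_add_sum_range hb hbd x hfin
  have hgeom : (∑ j ∈ range d, x ^ j) * (x - 1) = x ^ d - 1 := geom_sum_mul x d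
  have hgeom_b : (∑ k ∈ range d, x ^ (k * b)) * (x ^ b - 1) = x ^ (b * d) - 1 := by
    simp_rw [pow_mul' x _ b]
    rw [geom_sum_mul, ← pow_mul]
  linear_combination (1 - x ^ b) * (x - 1) * hkey + (1 - x ^ b) * hgeom + (x - 1) * hgeom_b

end GeneratingPolynomial

theorem stmt_15_general (b d : ℕ) (hb : 1 ≤ b) (hbd : Nat.gcd b d = 1) :
    ∃ hfin : {s : ℕ | 1 ≤ s ∧ ¬ ∃ k ℓ : ℕ, s = k * b + ℓ * d}.Finite,
      (1 - (X : Polynomial ℤ) ^ b) * (1 - X ^ d) *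
          (1 + (X - 1) * ∑ s ∈ hfin.toFinset, X ^ s) =
        (1 - X ^ (b * d)) * (1 - X) :=
  ⟨gaps_finite hbd, one_sub_pow_mul_one_sub_pow_mul_gaps hb hbd X _⟩

/-- **Lemma (Sylvester coin polynomial identity).**
For coprime positive integers `b, d`, the set `S_{b,d}` of positive integers not
representable as `kb + ℓd` with `k, ℓ ∈ ℕ` is finite, and its generating polynomial
`S_{b,d}(t) = ∑_{s ∈ S_{b,d}} t^s` satisfies
`(1 - t^b)(1 - t^d)(1 + (t-1)·S_{b,d}(t)) = (1 - t^{bd})(1 - t)` in `ℤ[t]`. -/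
theorem stmt_15 (b d : ℕ) (hb : 1 ≤ b) (hd : 1 ≤ d) (hbd : Nat.gcd b d = 1) :
    ∃ hfin : {s : ℕ | 1 ≤ s ∧ ¬ ∃ k ℓ : ℕ, s = k * b + ℓ * d}.Finite,
      (1 - (X : Polynomial ℤ) ^ b) * (1 - X ^ d) *
          (1 + (X - 1) * ∑ s ∈ hfin.toFinset, X ^ s) =
        (1 - X ^ (b * d)) * (1 - X) :=
  stmt_15_general b d hb hbd
end

section
/- Let b ≥ 2 and d ≥ 2 be integers with gcd(b, d) = 1. Let β₁ be the unique element of {0, 1, …, b−1} with β₁·d ≡ 1 (mod b), and let δ₁ be the unique element of {0, 1, …, d−1} with δ₁·b ≡ 1 (mod d). For a nonnegative integer m and a monomial u, write [m]_u = 1 + u + u² + ⋯ + u^{m−1} ∈ ℤ[t]. Then in ℤ[t]: (1 − t^{bd})(1 − t) = (1 − t^b)(1 − t^d) · ( [β₁]_{t^d}·[δ₁]_{t^b} − t·[b−β₁]_{t^d}·[d−δ₁]_{t^b} ). Moreover, the polynomial P(t) = [β₁]_{t^d}·[δ₁]_{t^b} − t·[b−β₁]_{t^d}·[d−δ₁]_{t^b}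 has all coefficients in {−1, 0, 1}, with exactly β₁·δ₁ coefficients equal to 1 and exactly (b−β₁)·(d−δ₁) coefficients equal to −1. -/
open Polynomial Finset

private lemma geom_aux18 (x : Polynomial ℤ) (n : ℕ) :
    (1 - x) * ∑ j ∈ Finset.range n, x ^ j = 1 - x ^ n := by
  linear_combination -geom_sum_mul x n

private lemma mod_drop18 (b a k : ℕ) : a + b * k ≡ a [MOD b] :=
  Nat.add_mul_mod_self_left a b k

private lemma coeff_sum_pow18 (s : Finset (ℕ × ℕ)) (f : ℕ × ℕ → ℕ)
    (hf : Set.InjOn f s) (m : ℕ) :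
    (∑ p ∈ s, (X : Polynomial ℤ) ^ (f p)).coeff m =
      if m ∈ s.image f then 1 else 0 := by
  rw [finset_sum_coeff]
  simp only [coeff_X_pow]
  by_cases h : m ∈ s.image f
  · obtain ⟨p₀, hp₀, hfp₀⟩ := Finset.mem_image.mp h
    rw [if_pos h, Finset.sum_eq_single p₀, if_pos hfp₀.symm]
    · intro p hp hne
      exact if_neg fun he => hne (hf hp hp₀ (he.symm.trans hfp₀.symm))
    · intro h'; exact absurd hp₀ h'
  · rw [if_neg h]
    exact Finset.sum_eq_zero fun p hp =>
      if_neg fun he => h (Finset.mem_image.mpr ⟨p, hp, he.symm⟩)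

/-- **Theorem (symmetric formula for `[b]_{t^d}/[b]_t`).**
Let `gcd(b,d) = 1` with `b, d ≥ 2`, let `β₁ ∈ {0,…,b-1}` satisfy `β₁d ≡ 1 (mod b)` and
let `δ₁ ∈ {0,…,d-1}` satisfy `δ₁b ≡ 1 (mod d)`. Then, with
`P = [β₁]_{t^d}[δ₁]_{t^b} - t[b-β₁]_{t^d}[d-δ₁]_{t^b}`, one has
`(1 - t^{bd})(1 - t) = (1 - t^b)(1 - t^d)·P` in `ℤ[t]`; moreover all coefficients of `P`
lie in `{-1, 0, 1}`, with exactly `β₁δ₁` coefficients equal to `1` and exactly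
`(b-β₁)(d-δ₁)` coefficients equal to `-1`. -/
theorem stmt_18 (b d : ℕ) (hb : 2 ≤ b) (hd : 2 ≤ d) (hbd : Nat.gcd b d = 1)
    (β₁ δ₁ : ℕ) (hβlt : β₁ < b) (hβ : β₁ * d ≡ 1 [MOD b])
    (hδlt : δ₁ < d) (hδ : δ₁ * b ≡ 1 [MOD d]) :
    (1 - (X : Polynomial ℤ) ^ (b * d)) * (1 - X) =
        (1 - X ^ b) * (1 - X ^ d) *
          ((∑ j ∈ Finset.range β₁, (X ^ d) ^ j) * (∑ j ∈ Finset.range δ₁, (X ^ b) ^ j) -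
            X * (∑ j ∈ Finset.range (b - β₁), (X ^ d) ^ j) *
              (∑ j ∈ Finset.range (d - δ₁), (X ^ b) ^ j)) ∧
      (∀ m : ℕ,
        (((∑ j ∈ Finset.range β₁, ((X : Polynomial ℤ) ^ d) ^ j) *
            (∑ j ∈ Finset.range δ₁, (X ^ b) ^ j) -
          X * (∑ j ∈ Finset.range (b - β₁), (X ^ d) ^ j) *
            (∑ j ∈ Finset.range (d - δ₁), (X ^ b) ^ j)).coeff m = -1 ∨
         ((∑ j ∈ Finset.range β₁, ((X : Polynomial ℤ) ^ d) ^ j) *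
            (∑ j ∈ Finset.range δ₁, (X ^ b) ^ j) -
          X * (∑ j ∈ Finset.range (b - β₁), (X ^ d) ^ j) *
            (∑ j ∈ Finset.range (d - δ₁), (X ^ b) ^ j)).coeff m = 0 ∨
         ((∑ j ∈ Finset.range β₁, ((X : Polynomial ℤ) ^ d) ^ j) *
            (∑ j ∈ Finset.range δ₁, (X ^ b) ^ j) -
          X * (∑ j ∈ Finset.range (b - β₁), (X ^ d) ^ j) *
            (∑ j ∈ Finset.range (d - δ₁), (X ^ b) ^ j)).coeff m = 1)) ∧
      (((∑ j ∈ Finset.range β₁, ((X : Polynomial ℤ) ^ d) ^ j) *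
            (∑ j ∈ Finset.range δ₁, (X ^ b) ^ j) -
          X * (∑ j ∈ Finset.range (b - β₁), (X ^ d) ^ j) *
            (∑ j ∈ Finset.range (d - δ₁), (X ^ b) ^ j)).support.filter
          (fun m =>
            ((∑ j ∈ Finset.range β₁, ((X : Polynomial ℤ) ^ d) ^ j) *
                (∑ j ∈ Finset.range δ₁, (X ^ b) ^ j) -
              X * (∑ j ∈ Finset.range (b - β₁), (X ^ d) ^ j) *
                (∑ j ∈ Finset.range (d - δ₁), (X ^ b) ^ j)).coeff m = 1)).card =
          β₁ * δ₁ ∧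
      (((∑ j ∈ Finset.range β₁, ((X : Polynomial ℤ) ^ d) ^ j) *
            (∑ j ∈ Finset.range δ₁, (X ^ b) ^ j) -
          X * (∑ j ∈ Finset.range (b - β₁), (X ^ d) ^ j) *
            (∑ j ∈ Finset.range (d - δ₁), (X ^ b) ^ j)).support.filter
          (fun m =>
            ((∑ j ∈ Finset.range β₁, ((X : Polynomial ℤ) ^ d) ^ j) *
                (∑ j ∈ Finset.range δ₁, (X ^ b) ^ j) -
              X * (∑ j ∈ Finset.range (b - β₁), (X ^ d) ^ j) *
                (∑ j ∈ Finset.range (d - δ₁), (X ^ b) ^ j)).coeff m = -1)).card =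
          (b - β₁) * (d - δ₁) := by
  -- abbreviations
  set A := (∑ j ∈ Finset.range β₁, ((X : Polynomial ℤ) ^ d) ^ j) with hA_def
  set B := (∑ j ∈ Finset.range δ₁, ((X : Polynomial ℤ) ^ b) ^ j) with hB_def
  set C := (∑ j ∈ Finset.range (b - β₁), ((X : Polynomial ℤ) ^ d) ^ j) with hC_def
  set D := (∑ j ∈ Finset.range (d - δ₁), ((X : Polynomial ℤ) ^ b) ^ j) with hD_def
  set P := A * B - X * C * D with hP_def
  -- basic positivity of β₁, δ₁
  have hβ1 : 1 ≤ β₁ := by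
    rcases Nat.eq_zero_or_pos β₁ with h | h
    · exfalso
      rw [h, zero_mul] at hβ
      have h2 : b ∣ 1 := Nat.modEq_zero_iff_dvd.mp hβ.symm
      have := Nat.le_of_dvd one_pos h2; omega
    · exact h
  have hδ1 : 1 ≤ δ₁ := by
    rcases Nat.eq_zero_or_pos δ₁ with h | h
    · exfalso
      rw [h, zero_mul] at hδ
      have h2 : d ∣ 1 := Nat.modEq_zero_iff_dvd.mp hδ.symm
      have := Nat.le_of_dvd one_pos h2; omega
    · exact h
  -- the key numeric identity d β₁ + b δ₁ = b d + 1
  have hsum : d * β₁ + b * δ₁ = b * d + 1 := by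
    have hmb : d * β₁ + b * δ₁ ≡ 1 [MOD b] :=
      (mod_drop18 b (d * β₁) δ₁).trans (by rwa [mul_comm] at hβ)
    have hmd : d * β₁ + b * δ₁ ≡ 1 [MOD d] := by
      calc d * β₁ + b * δ₁ = b * δ₁ + d * β₁ := by ring
        _ ≡ b * δ₁ [MOD d] := mod_drop18 d (b * δ₁) β₁
        _ ≡ 1 [MOD d] := by rwa [mul_comm] at hδ
    have h1led : 1 * 1 ≤ d * β₁ := Nat.mul_le_mul (by omega) hβ1
    have h1leb : 1 * 1 ≤ b * δ₁ := Nat.mul_le_mul (by omega) hδ1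
    have h1le : 1 ≤ d * β₁ + b * δ₁ := by omega
    have hdvb : b ∣ (d * β₁ + b * δ₁ - 1) := (Nat.modEq_iff_dvd' h1le).mp hmb.symm
    have hdvd : d ∣ (d * β₁ + b * δ₁ - 1) := (Nat.modEq_iff_dvd' h1le).mp hmd.symm
    have hcop : Nat.Coprime b d := hbd
    obtain ⟨c, hc⟩ := hcop.mul_dvd_of_dvd_of_dvd hdvb hdvd
    have hc' : d * β₁ + b * δ₁ = b * d * c + 1 := by rw [← hc]; omega
    have hub1 : d * β₁ < b * d := by
      rw [mul_comm b d]; exact mul_lt_mul_of_pos_left hβlt (by omega)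
    have hub2 : b * δ₁ < b * d := mul_lt_mul_of_pos_left hδlt (by omega)
    have hc1 : c = 1 := by
      rcases Nat.lt_or_ge c 1 with h | h
      · exfalso
        interval_cases c
        rw [mul_zero] at hc'
        omega
      · rcases Nat.lt_or_ge c 2 with h2 | h2
        · omega
        · exfalso
          have h3 : b * d * 2 ≤ b * d * c := Nat.mul_le_mul_left _ h2
          linarith
    rw [hc1, mul_one] at hc'
    exact hc'
  -- exponents p', q'
  have hdpos : 0 < d * β₁ := Nat.mul_pos (by omega) (by omega)
  have hbpos : 0 < b * δ₁ := Nat.mul_pos (by omega) (by omega)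
  obtain ⟨p', hp'⟩ : ∃ p', d * β₁ = p' + 1 := ⟨d * β₁ - 1, by omega⟩
  obtain ⟨q', hq'⟩ : ∃ q', b * δ₁ = q' + 1 := ⟨b * δ₁ - 1, by omega⟩
  have hbd' : b * d = p' + q' + 1 := by omega
  have hCexp : d * (b - β₁) = q' := by
    have e : d * (b - β₁) + d * β₁ = d * b := by
      rw [← Nat.mul_add]; congr 1; omega
    have e2 : d * b = b * d := mul_comm d b
    omega
  have hDexp : b * (d - δ₁) = p' := by
    have e : b * (d - δ₁) + b * δ₁ = b * d := by
      rw [← Nat.mul_add]; congr 1; omega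
    omega
  -- geometric sum facts
  have hga : (1 - (X : Polynomial ℤ) ^ d) * A = 1 - X ^ (p' + 1) := by
    rw [hA_def, geom_aux18, ← pow_mul, hp']
  have hgb : (1 - (X : Polynomial ℤ) ^ b) * B = 1 - X ^ (q' + 1) := by
    rw [hB_def, geom_aux18, ← pow_mul, hq']
  have hgc : (1 - (X : Polynomial ℤ) ^ d) * C = 1 - X ^ q' := by
    rw [hC_def, geom_aux18, ← pow_mul, hCexp]
  have hgd : (1 - (X : Polynomial ℤ) ^ b) * D = 1 - X ^ p' := by
    rw [hD_def, geom_aux18, ← pow_mul, hDexp]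
  -- modular injectivity
  have hdinj : ∀ j j' : ℕ, j < b → j' < b → d * j ≡ d * j' [MOD b] → j = j' := by
    intro j j' hj hj' h1
    have h2 : j ≡ j' [MOD b] := by
      calc j = 1 * j := (one_mul j).symm
        _ ≡ β₁ * d * j [MOD b] := (hβ.mul_right j).symm
        _ = β₁ * (d * j) := by ring
        _ ≡ β₁ * (d * j') [MOD b] := h1.mul_left β₁
        _ = β₁ * d * j' := by ring
        _ ≡ 1 * j' [MOD b] := hβ.mul_right j'
        _ = j' := one_mul j'
    rwa [Nat.ModEq, Nat.mod_eq_of_lt hj, Nat.mod_eq_of_lt hj'] at h2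
  have hgen : ∀ j k j' k' : ℕ, j < b → j' < b →
      d * j + b * k = d * j' + b * k' → j = j' ∧ k = k' := by
    intro j k j' k' hj hj' h
    have h1 : d * j ≡ d * j' [MOD b] := by
      have e1 : d * j + b * k ≡ d * j [MOD b] := mod_drop18 b (d * j) k
      have e2 : d * j' + b * k' ≡ d * j' [MOD b] := mod_drop18 b (d * j') k'
      exact e1.symm.trans (h ▸ e2)
    have hjj : j = j' := hdinj j j' hj hj' h1
    refine ⟨hjj, ?_⟩
    subst hjj
    have hbk : b * k = b * k' := by omega
    exact Nat.eq_of_mul_eq_mul_left (by omega) hbk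
  -- disjointness of positive and negative exponent sets
  have hdisj : ∀ j k j' k' : ℕ, j < β₁ → j' < b - β₁ →
      d * j + b * k = 1 + d * j' + b * k' → False := by
    intro j k j' k' hj hj' h
    have e1 : d * j + b * k ≡ d * j [MOD b] := mod_drop18 b (d * j) k
    have e2 : 1 + d * j' + b * k' ≡ 1 + d * j' [MOD b] := mod_drop18 b (1 + d * j') k'
    have e3 : d * j ≡ 1 + d * j' [MOD b] := e1.symm.trans (h ▸ e2)
    have e4 : d * (β₁ + j') ≡ 1 + d * j' [MOD b] := by
      calc d * (β₁ + j') = d * β₁ + d * j' := by ring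
        _ ≡ 1 + d * j' [MOD b] := Nat.ModEq.add_right _ (by rwa [mul_comm] at hβ)
    have := hdinj j (β₁ + j') (by omega) (by omega) (e3.trans e4.symm)
    omega
  -- injectivity of the exponent maps
  have hfinj : Set.InjOn (fun p : ℕ × ℕ => d * p.1 + b * p.2)
      ↑(Finset.range β₁ ×ˢ Finset.range δ₁) := by
    rintro ⟨j, k⟩ hjk ⟨j', k'⟩ hjk' h
    simp only [Finset.coe_product, Set.mem_prod, Finset.mem_coe, Finset.mem_range] at hjk hjk'
    obtain ⟨h1, h2⟩ := hgen j k j' k' (by omega) (by omega) h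
    simp [h1, h2]
  have hginj : Set.InjOn (fun p : ℕ × ℕ => 1 + d * p.1 + b * p.2)
      ↑(Finset.range (b - β₁) ×ˢ Finset.range (d - δ₁)) := by
    rintro ⟨j, k⟩ hjk ⟨j', k'⟩ hjk' h
    simp only [Finset.coe_product, Set.mem_prod, Finset.mem_coe, Finset.mem_range] at hjk hjk'
    have h' : d * j + b * k = d * j' + b * k' := by
      have h'' : 1 + d * j + b * k = 1 + d * j' + b * k' := h
      omega
    obtain ⟨h1, h2⟩ := hgen j k j' k' (by omega) (by omega) h'
    simp [h1, h2]
  -- the two exponent sets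
  set Sp := (Finset.range β₁ ×ˢ Finset.range δ₁).image (fun p : ℕ × ℕ => d * p.1 + b * p.2)
    with hSp_def
  set Sn := (Finset.range (b - β₁) ×ˢ Finset.range (d - δ₁)).image
    (fun p : ℕ × ℕ => 1 + d * p.1 + b * p.2) with hSn_def
  have hSdisj : ∀ m, m ∈ Sp → m ∈ Sn → False := by
    intro m h1 h2
    rw [hSp_def] at h1
    rw [hSn_def] at h2
    obtain ⟨⟨j, k⟩, hjk, he1⟩ := Finset.mem_image.mp h1
    obtain ⟨⟨j', k'⟩, hjk', he2⟩ := Finset.mem_image.mp h2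
    simp only [Finset.mem_product, Finset.mem_range] at hjk hjk'
    exact hdisj j k j' k' hjk.1 hjk'.1 (he1.trans he2.symm)
  -- expansion of products as sums of monomials
  have hexpand : ∀ e n₁ n₂ : ℕ,
      (X : Polynomial ℤ) ^ e * ((∑ j ∈ Finset.range n₁, ((X : Polynomial ℤ) ^ d) ^ j) *
        (∑ k ∈ Finset.range n₂, ((X : Polynomial ℤ) ^ b) ^ k))
      = ∑ p ∈ Finset.range n₁ ×ˢ Finset.range n₂, X ^ (e + d * p.1 + b * p.2) := by
    intro e n₁ n₂
    rw [Finset.sum_mul_sum, Finset.mul_sum, Finset.sum_product]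
    refine Finset.sum_congr rfl fun j _ => ?_
    rw [Finset.mul_sum]
    refine Finset.sum_congr rfl fun k _ => ?_
    ring
  have hPsum : P = (∑ p ∈ Finset.range β₁ ×ˢ Finset.range δ₁,
        (X : Polynomial ℤ) ^ (d * p.1 + b * p.2))
      - ∑ p ∈ Finset.range (b - β₁) ×ˢ Finset.range (d - δ₁),
        (X : Polynomial ℤ) ^ (1 + d * p.1 + b * p.2) := by
    have h0 := hexpand 0 β₁ δ₁
    have h1 := hexpand 1 (b - β₁) (d - δ₁)
    simp only [pow_zero, one_mul, zero_add] at h0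
    rw [hP_def, hA_def, hB_def, hC_def, hD_def, ← h0, ← h1]
    ring
  -- the key coefficient formula
  have hkey : ∀ m : ℕ, P.coeff m = (if m ∈ Sp then 1 else 0) - (if m ∈ Sn then 1 else 0) := by
    intro m
    rw [hPsum, Polynomial.coeff_sub, coeff_sum_pow18 _ _ hfinj, coeff_sum_pow18 _ _ hginj]
  have hsupp1 : P.support.filter (fun m => P.coeff m = 1) = Sp := by
    ext m
    simp only [Finset.mem_filter, Polynomial.mem_support_iff, hkey m]
    by_cases h1 : m ∈ Sp <;> by_cases h2 : m ∈ Sn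
    · exact absurd h2 fun h2 => hSdisj m h1 h2
    · norm_num [h1, h2]
    · norm_num [h1, h2]
    · norm_num [h1, h2]
  have hsupp2 : P.support.filter (fun m => P.coeff m = -1) = Sn := by
    ext m
    simp only [Finset.mem_filter, Polynomial.mem_support_iff, hkey m]
    by_cases h1 : m ∈ Sp <;> by_cases h2 : m ∈ Sn
    · exact absurd h2 fun h2 => hSdisj m h1 h2
    · norm_num [h1, h2]
    · norm_num [h1, h2]
    · norm_num [h1, h2]
  refine ⟨?_, ?_, ?_, ?_⟩
  · -- the polynomial identity
    rw [show b * d = p' + q' + 1 from hbd']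
    have e1 : (1 - (X : Polynomial ℤ) ^ b) * (1 - X ^ d) * P
        = (1 - X ^ (p' + 1)) * (1 - X ^ (q' + 1)) - X * ((1 - X ^ q') * (1 - X ^ p')) := by
      rw [hP_def, ← hga, ← hgb, ← hgc, ← hgd]
      ring
    rw [e1]
    ring
  · intro m
    rw [hkey m]
    split_ifs <;> norm_num
  · rw [hsupp1, hSp_def, Finset.card_image_of_injOn hfinj, Finset.card_product,
      Finset.card_range, Finset.card_range]
  · rw [hsupp2, hSn_def, Finset.card_image_of_injOn hginj, Finset.card_product,
      Finset.card_range, Finset.card_range]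
end
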